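/- arXiv:2004.03963 — 6 statements merged into one kernel-verified Lean document; each statement's English description precedes it below -/
import Mathlib

section
/- Let k be a positive integer with 1 ≤ k ≤ n/2, let D ⊆ F_2^n be an antipodal (2k+1)-design, and let C ⊆ D be a code containing exactly one point from each pair {x, −x} of antipodal points of D. Then C is a (k,k)-design in F_2^n. -/
open Finset

/-- The Krawtchouk polynomials `Q_i^{(n)}(t)`, determined by `Q_0 = 1`, `Q_1 = t` and the
three-term recurrence `n·t·Q_i(t) = (n−i)·Q_{i+1}(t) + i·Q_{i−1}(t)`. -/
noncomputable def kraw (n : ℕ) : ℕ → ℝ → ℝ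
  | 0, _ => 1
  | 1, t => t
  | (i+2), t =>
      ((n : ℝ) * t * kraw n (i+1) t - ((i : ℝ) + 1) * kraw n i t) / ((n : ℝ) - ((i : ℝ) + 1))

/-- The "inner product" `⟨x,y⟩ = 1 − 2 d(x,y)/n`. -/
noncomputable def ip (n : ℕ) (x y : Fin n → ZMod 2) : ℝ :=
  1 - 2 * (hammingDist x y : ℝ) / (n : ℝ)

/-- The `i`-th moment `M_i(C) = ∑_{x,y ∈ C} Q_i^{(n)}(⟨x,y⟩)`. -/
noncomputable def moment (n : ℕ) (C : Finset (Fin n → ZMod 2)) (i : ℕ) : ℝ :=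
  ∑ x ∈ C, ∑ y ∈ C, kraw n i (ip n x y)

/-- The antipodal (complement) point `−x`. -/
def antip {n : ℕ} (x : Fin n → ZMod 2) : Fin n → ZMod 2 := fun j => x j + 1

/-- `C` is a `(k,k)`-design: a nonempty code with `M_i(C) = 0` for all even `i` with `2 ≤ i ≤ 2k`. -/
def IsKKDesign (n k : ℕ) (C : Finset (Fin n → ZMod 2)) : Prop :=
  C.Nonempty ∧ ∀ j : ℕ, 1 ≤ j → j ≤ k → moment n C (2 * j) = 0

/-- `C` is an `m`-design: a nonempty code with `M_i(C) = 0` for all `1 ≤ i ≤ m`. -/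
def IsMDesign (n m : ℕ) (C : Finset (Fin n → ZMod 2)) : Prop :=
  C.Nonempty ∧ ∀ i : ℕ, 1 ≤ i → i ≤ m → moment n C i = 0

/-- Generalized binomial coefficient `C(z,j)` for real `z`. -/
noncomputable def gchoose (z : ℝ) (j : ℕ) : ℝ :=
  (∏ i ∈ Finset.range j, (z - (i : ℝ))) / (Nat.factorial j : ℝ)

/-- The Krawtchouk polynomial `K_i^{(m)}(z)` in the variable `z`. -/
noncomputable def krawK (m i : ℕ) (z : ℝ) : ℝ :=
  ∑ j ∈ Finset.range (i + 1), (-1 : ℝ) ^ j * gchoose z j * gchoose ((m : ℝ) - z) (i - j)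

/-- The adjacent polynomial `Q_i^{1,1}(t) = K_i^{(n−2)}(n(1−t)/2 − 1) / ∑_{j=0}^i C(n−1,j)`. -/
noncomputable def Q11 (n i : ℕ) (t : ℝ) : ℝ :=
  krawK (n - 2) i ((n : ℝ) * (1 - t) / 2 - 1) /
    (∑ j ∈ Finset.range (i + 1), ((n - 1).choose j : ℝ))


section Antipode

variable {n : ℕ}

lemma antip_antip (x : Fin n → ZMod 2) : antip (antip x) = x := by
  funext j
  simp [antip, add_assoc, CharTwo.add_self_eq_zero]

lemma antip_injective : Function.Injective (antip (n := n)) :=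
  Function.LeftInverse.injective antip_antip

lemma hammingDist_antip_add_hammingDist (x y : Fin n → ZMod 2) :
    hammingDist x (antip y) + hammingDist x y = n := by
  classical
  have flip : ∀ a b : ZMod 2, a ≠ b + 1 ↔ ¬a ≠ b := by decide
  simp only [hammingDist, antip, flip]
  simpa using Finset.card_filter_add_card_filter_not (s := Finset.univ) (p := fun i => ¬x i ≠ y i)

lemma ip_comm (x y : Fin n → ZMod 2) : ip n x y = ip n y x := by
  simp [ip, hammingDist_comm]

lemma ip_antip_right (hn : n ≠ 0) (x y : Fin n → ZMod 2) :
    ip n x (antip y) = -ip n x y := by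
  have hdist : (hammingDist x (antip y) : ℝ) = n - hammingDist x y := by
    rw [eq_sub_iff_add_eq]
    exact_mod_cast hammingDist_antip_add_hammingDist x y
  have hn' : (n : ℝ) ≠ 0 := Nat.cast_ne_zero.mpr hn
  simp only [ip, hdist]
  field_simp
  ring

lemma ip_antip_left (hn : n ≠ 0) (x y : Fin n → ZMod 2) :
    ip n (antip x) y = -ip n x y := by
  rw [ip_comm, ip_antip_right hn, ip_comm]

end Antipode

lemma kraw_neg (n i : ℕ) (t : ℝ) : kraw n i (-t) = (-1 : ℝ) ^ i * kraw n i t := by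
  induction i using Nat.twoStepInduction with
  | zero => simp [kraw]
  | one => simp [kraw]
  | more i ih₀ ih₁ =>
    simp only [kraw, ih₀, ih₁, ← mul_div_assoc]
    ring

lemma kraw_two_mul_neg (n j : ℕ) (t : ℝ) : kraw n (2 * j) (-t) = kraw n (2 * j) t := by
  simp [kraw_neg, pow_mul]

section Halving

variable {n : ℕ} {D C : Finset (Fin n → ZMod 2)}

lemma sum_eq_sum_add_sum_antip_of_halving (hDanti : ∀ x ∈ D, antip x ∈ D) (hCD : C ⊆ D)
    (hpair : ∀ x ∈ D, Xor' (x ∈ C) (antip x ∈ C)) {M : Type*} [AddCommMonoid M]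
    (g : (Fin n → ZMod 2) → M) :
    ∑ x ∈ D, g x = ∑ x ∈ C, g x + ∑ x ∈ C, g (antip x) := by
  classical
  have hD : D = C ∪ C.image antip := by
    ext x
    simp only [Finset.mem_union, Finset.mem_image]
    constructor
    · intro hx
      rcases hpair x hx with ⟨hxC, -⟩ | ⟨hxC, -⟩
      · exact Or.inl hxC
      · exact Or.inr ⟨antip x, hxC, antip_antip x⟩
    · rintro (hxC | ⟨y, hyC, rfl⟩)
      · exact hCD hxC
      · exact hDanti y (hCD hyC)
  have hdisj : Disjoint C (C.image antip) := by
    simp only [Finset.disjoint_left, Finset.mem_image, not_exists, not_and]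
    rintro _ hxC y hyC rfl
    rcases hpair y (hCD hyC) with ⟨-, hy⟩ | ⟨-, hy⟩
    · exact hy hxC
    · exact hy hyC
  rw [hD, Finset.sum_union hdisj, Finset.sum_image fun a _ b _ h => antip_injective h]

lemma nonempty_of_halving (hpair : ∀ x ∈ D, Xor' (x ∈ C) (antip x ∈ C)) (hD : D.Nonempty) :
    C.Nonempty := by
  obtain ⟨x, hx⟩ := hD
  rcases hpair x hx with ⟨hxC, -⟩ | ⟨hxC, -⟩
  exacts [⟨x, hxC⟩, ⟨antip x, hxC⟩]

/-- Even Krawtchouk polynomials are even functions and `⟨x, −y⟩ = −⟨x, y⟩`, so each of the four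
blocks `±C × ±C` of `D × D` contributes `M_{2j}(C)`. -/
lemma moment_two_mul_of_halving (hn : n ≠ 0) (hDanti : ∀ x ∈ D, antip x ∈ D) (hCD : C ⊆ D)
    (hpair : ∀ x ∈ D, Xor' (x ∈ C) (antip x ∈ C)) (j : ℕ) :
    moment n D (2 * j) = 4 * moment n C (2 * j) := by
  have hsum := sum_eq_sum_add_sum_antip_of_halving (M := ℝ) hDanti hCD hpair
  simp only [moment, hsum, ip_antip_left hn, ip_antip_right hn, kraw_two_mul_neg, ← two_mul,
    ← Finset.mul_sum]
  ring

end Halving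

theorem stmt_0_general (n k : ℕ) (hn : 0 < n)
    (D C : Finset (Fin n → ZMod 2))
    (hDanti : ∀ x ∈ D, antip x ∈ D)
    (hD : IsMDesign n (2 * k + 1) D)
    (hCD : C ⊆ D)
    (hpair : ∀ x ∈ D, Xor' (x ∈ C) (antip x ∈ C)) :
    IsKKDesign n k C := by
  refine ⟨nonempty_of_halving hpair hD.1, fun j hj hjk => ?_⟩
  have hDj : moment n D (2 * j) = 0 := hD.2 (2 * j) (by omega) (by omega)
  rw [moment_two_mul_of_halving hn.ne' hDanti hCD hpair j] at hDj
  linarith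

/-- halving an antipodal `(2k+1)`-design yields a `(k,k)`-design. -/
theorem stmt_0 (n k : ℕ) (hn : 0 < n) (hk : 1 ≤ k) (hkn : 2 * k ≤ n)
    (D C : Finset (Fin n → ZMod 2))
    (hDanti : ∀ x ∈ D, antip x ∈ D)
    (hD : IsMDesign n (2 * k + 1) D)
    (hCD : C ⊆ D)
    (hpair : ∀ x ∈ D, Xor' (x ∈ C) (antip x ∈ C)) :
    IsKKDesign n k C :=
  stmt_0_general n k hn D C hDanti hD hCD hpair
end

section
/- Let n = 2ℓ with ℓ ≥ 2, let D ⊆ F_2^n be the even-weight code, and let C ⊆ D contain exactly one point from each pair {x, −x} of antipodal points of D. Then C is an (ℓ−1, ℓ−1)-design in F_2^n with |C| = 2^{2ℓ−2} = ∑_{i=0}^{ℓ−1} C(2ℓ−1, i); in particular C is a tight (ℓ−1, ℓ−1)-design. -/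
/-!
For `i < n` the Krawtchouk value `Q_i(⟨x, y⟩)` equals `C(n, i)⁻¹ ∑_{|z| = i} (-1)^{z·(x+y)}`:
both sides obey the same three-term recurrence, which for the character sums is the count of
the ways to reach a word of weight `i ± 1` by flipping one coordinate of a word of weight `i`.
Hence `M_i(C) = C(n, i)⁻¹ ∑_{|z| = i} (∑_{x ∈ C} (-1)^{z·x})²`. For `|z|` even the character
`(-1)^{z·x}` is invariant under `x ↦ -x`, so its sum over `C` is half its sum over the
even-weight code, and that vanishes unless `z ∈ {0, 1}`, the dual of the even-weight code.
-/

open Finset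

namespace BinaryCode

variable {n : ℕ}

lemma hammingNorm_eq_sum_val (v : Fin n → ZMod 2) : hammingNorm v = ∑ j, (v j).val := by
  have hval : ∀ a : ZMod 2, a.val = if a ≠ 0 then 1 else 0 := by decide
  simp only [hval, sum_boole, Nat.cast_id]
  rfl

lemma add_self_eq_zero (x : Fin n → ZMod 2) : x + x = 0 :=
  funext fun j => CharTwo.add_self_eq_zero (x j)

lemma antip_eq_add_one (x : Fin n → ZMod 2) : antip x = x + 1 := rfl

lemma antip_antip (x : Fin n → ZMod 2) : antip (antip x) = x := by
  rw [antip_eq_add_one, antip_eq_add_one, add_assoc, add_self_eq_zero, add_zero]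

lemma hammingNorm_antip_add_hammingNorm (x : Fin n → ZMod 2) :
    hammingNorm (antip x) + hammingNorm x = n := by
  have hzero : ∀ a : ZMod 2, a + 1 ≠ 0 ↔ a = 0 := by decide
  simpa only [hammingNorm, antip, hzero, not_not, card_univ, Fintype.card_fin]
    using card_filter_add_card_filter_not (s := univ) (fun j => x j = 0)

def signChar : AddChar (ZMod 2) ℝ where
  toFun a := (-1) ^ a.val
  map_zero_eq_one' := by simp
  map_add_eq_mul' a b := by rw [ZMod.val_add, ← neg_one_pow_eq_pow_mod_two, pow_add]

lemma signChar_apply (a : ZMod 2) : signChar a = (-1) ^ a.val := rfl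

lemma sum_signChar_apply (v : Fin n → ZMod 2) : ∑ j, signChar (v j) = n - 2 * hammingNorm v := by
  have h (a : ZMod 2) : signChar a = 1 - 2 * a.val := by
    rw [signChar_apply]
    have := ZMod.val_lt a
    interval_cases a.val <;> norm_num
  simp only [h, sum_sub_distrib, ← mul_sum, hammingNorm_eq_sum_val]
  simp

def walsh (z : Fin n → ZMod 2) : AddChar (Fin n → ZMod 2) ℝ where
  toFun x := signChar (z ⬝ᵥ x)
  map_zero_eq_one' := by simp
  map_add_eq_mul' x y := by simp only [dotProduct_add, AddChar.map_add_eq_mul]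

lemma walsh_apply (z x : Fin n → ZMod 2) : walsh z x = signChar (z ⬝ᵥ x) := rfl

lemma walsh_comm (z x : Fin n → ZMod 2) : walsh z x = walsh x z := by
  rw [walsh_apply, walsh_apply, dotProduct_comm]

lemma walsh_add_left (z w x : Fin n → ZMod 2) : walsh (z + w) x = walsh z x * walsh w x := by
  rw [walsh_comm, AddChar.map_add_eq_mul, walsh_comm x, walsh_comm x]

lemma walsh_single_left (j : Fin n) (x : Fin n → ZMod 2) :
    walsh (Pi.single j 1) x = signChar (x j) := by
  rw [walsh_comm, walsh_apply, dotProduct_single, mul_one]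

lemma walsh_one_right (z : Fin n → ZMod 2) : walsh z 1 = (-1) ^ hammingNorm z := by
  have hsum : z ⬝ᵥ 1 = (hammingNorm z : ZMod 2) := by
    rw [dotProduct_one, hammingNorm_eq_sum_val]
    push_cast
    simp only [ZMod.natCast_val, ZMod.cast_id', id]
  rw [walsh_apply, hsum, signChar_apply, ZMod.val_natCast, ← neg_one_pow_eq_pow_mod_two]

lemma walsh_antip (z x : Fin n → ZMod 2) :
    walsh z (antip x) = walsh z x * (-1) ^ hammingNorm z := by
  rw [antip_eq_add_one, AddChar.map_add_eq_mul, walsh_one_right]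

lemma walsh_ne_one {z : Fin n → ZMod 2} (hz : z ≠ 0) : walsh z ≠ 1 := by
  obtain ⟨j, hj⟩ := Function.ne_iff.1 hz
  refine AddChar.ne_one_iff.2 ⟨Pi.single j 1, ?_⟩
  have hval : (z j).val = 1 := by
    have := ZMod.val_lt (z j)
    have := (ZMod.val_ne_zero (z j)).2 hj
    omega
  rw [walsh_apply, dotProduct_single, mul_one, signChar_apply, hval]
  norm_num

lemma sum_walsh_eq_zero {z : Fin n → ZMod 2} (hz : z ≠ 0) : ∑ x, walsh z x = 0 :=
  AddChar.sum_eq_zero_of_ne_one (walsh_ne_one hz)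

def evenCode (n : ℕ) : Finset (Fin n → ZMod 2) :=
  univ.filter fun x => Even (hammingNorm x)

lemma sum_evenCode (f : (Fin n → ZMod 2) → ℝ) :
    ∑ x ∈ evenCode n, f x = (∑ x, f x + ∑ x, f x * walsh 1 x) / 2 := by
  have hind (x : Fin n → ZMod 2) :
      (if Even (hammingNorm x) then f x else 0) = (f x + f x * walsh 1 x) / 2 := by
    rw [walsh_comm, walsh_one_right]
    rcases Nat.even_or_odd (hammingNorm x) with h | h
    · rw [if_pos h, h.neg_one_pow]; ring
    · rw [if_neg (Nat.not_even_iff_odd.2 h), h.neg_one_pow]; ring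
  rw [evenCode, sum_filter, sum_congr rfl fun x _ => hind x, ← sum_div,
    sum_add_distrib]

lemma card_evenCode (hn : 0 < n) : #(evenCode n) = 2 ^ (n - 1) := by
  have hone : (1 : Fin n → ZMod 2) ≠ 0 := Function.ne_iff.2 ⟨⟨0, hn⟩, one_ne_zero⟩
  have h := sum_evenCode (n := n) fun _ => 1
  simp only [one_mul, sum_walsh_eq_zero hone, sum_const, add_zero,
    card_univ, Fintype.card_pi, prod_const, ZMod.card, Fintype.card_fin] at h
  rw [← Nat.cast_inj (R := ℝ), ← Nat.sub_add_cancel hn] at *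
  simpa [pow_succ] using h

lemma sum_walsh_evenCode {z : Fin n → ZMod 2} (hz0 : z ≠ 0) (hz1 : z ≠ 1) :
    ∑ x ∈ evenCode n, walsh z x = 0 := by
  have hz1' : z + 1 ≠ 0 := fun h => hz1 <| by
    rw [← add_zero z, ← add_self_eq_zero 1, ← add_assoc, h, zero_add]
  simp only [sum_evenCode, ← walsh_add_left, sum_walsh_eq_zero hz0, sum_walsh_eq_zero hz1']
  norm_num

lemma card_filter_eq_zero (w : Fin n → ZMod 2) :
    #{j | w j = 0} = n - hammingNorm w := by
  have := card_filter_add_card_filter_not (s := univ) (fun j => w j = 0)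
  simp only [card_univ, Fintype.card_fin] at this
  rw [hammingNorm]
  simp only [ne_eq] at *
  omega

lemma hammingNorm_add_single_of_eq_zero {w : Fin n → ZMod 2} {j : Fin n} (h : w j = 0) :
    hammingNorm (w + Pi.single j 1) = hammingNorm w + 1 := by
  have hsupp : univ.filter (fun k => (w + Pi.single j 1 : Fin n → ZMod 2) k ≠ 0) =
      insert j (univ.filter fun k => w k ≠ 0) := by
    ext k
    rcases eq_or_ne k j with rfl | hk
    · simp [h]
    · simp [hk]
  rw [hammingNorm, hsupp, card_insert_of_notMem (by simp [h]), hammingNorm]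

lemma hammingNorm_add_single_of_ne_zero {w : Fin n → ZMod 2} {j : Fin n} (h : w j ≠ 0) :
    hammingNorm (w + Pi.single j 1) + 1 = hammingNorm w := by
  have h' : (w + Pi.single j 1 : Fin n → ZMod 2) j = 0 := by
    have hone : ∀ a : ZMod 2, a ≠ 0 → a + 1 = 0 := by decide
    simpa using hone _ h
  rw [← hammingNorm_add_single_of_eq_zero h', add_assoc, add_self_eq_zero, add_zero]

lemma card_filter_hammingNorm_add_single (w : Fin n → ZMod 2) (i : ℕ) :
    #{j | hammingNorm (w + Pi.single j 1) = i} =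
      (if hammingNorm w = i + 1 then i + 1 else 0) +
        (if hammingNorm w + 1 = i then n - hammingNorm w else 0) := by
  have hflip (j : Fin n) : hammingNorm (w + Pi.single j 1) = i ↔
      (w j ≠ 0 ∧ hammingNorm w = i + 1) ∨ (w j = 0 ∧ hammingNorm w + 1 = i) := by
    by_cases hj : w j = 0
    · have := hammingNorm_add_single_of_eq_zero hj
      simp only [hj, ne_eq, not_true_eq_false, false_and, true_and, false_or]
      omega
    · have := hammingNorm_add_single_of_ne_zero hj
      simp only [hj, ne_eq, not_false_eq_true, true_and, false_and, or_false]
      omega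
  simp only [hflip]
  split_ifs with h₁ h₂ h₂
  · omega
  · simp only [h₂, and_false, or_false, add_zero]
    simp only [h₁, and_true]
    exact h₁
  · simp only [h₁, h₂, and_true, and_false, false_or, zero_add]
    exact card_filter_eq_zero w
  · simp [h₁, h₂]

def sphere (n i : ℕ) : Finset (Fin n → ZMod 2) :=
  univ.filter fun z => hammingNorm z = i

lemma sum_sphere_sum_add_single (g : (Fin n → ZMod 2) → ℝ) (i : ℕ) :
    ∑ z ∈ sphere n i, ∑ j, g (z + Pi.single j 1) =
      (i + 1) * ∑ w ∈ sphere n (i + 1), g w +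
        ∑ w ∈ univ.filter (fun w => hammingNorm w + 1 = i),
          ((n - hammingNorm w : ℕ) : ℝ) * g w := by
  have hshift (j : Fin n) : ∑ z ∈ sphere n i, g (z + Pi.single j 1) =
      ∑ w, if hammingNorm (w + Pi.single j 1) = i then g w else 0 := by
    rw [sphere, sum_filter]
    exact Fintype.sum_equiv (Equiv.addRight (Pi.single j 1)) _ _ fun z => by
      simp [add_assoc, add_self_eq_zero]
  rw [sum_comm, sum_congr rfl fun j _ => hshift j, sum_comm]
  simp only [← sum_filter, sum_const, nsmul_eq_mul,
    card_filter_hammingNorm_add_single]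
  push_cast
  simp only [add_mul, ite_mul, zero_mul, sum_add_distrib, sum_ite, sum_const_zero,
    add_zero, mul_sum, sphere]

def krawtchoukSum (n i : ℕ) (v : Fin n → ZMod 2) : ℝ :=
  ∑ z ∈ sphere n i, walsh z v

lemma krawtchoukSum_zero (v : Fin n → ZMod 2) : krawtchoukSum n 0 v = 1 := by
  have h : sphere n 0 = {0} := by
    ext z
    simp [sphere]
  simp [krawtchoukSum, h, walsh_comm _ v]

lemma mul_krawtchoukSum (v : Fin n → ZMod 2) (i : ℕ) :
    (n - 2 * hammingNorm v) * krawtchoukSum n i v =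
      ∑ z ∈ sphere n i, ∑ j, walsh (z + Pi.single j 1) v := by
  rw [krawtchoukSum, mul_sum]
  refine sum_congr rfl fun z _ => ?_
  rw [← sum_signChar_apply, sum_mul]
  simp only [walsh_add_left, walsh_single_left, mul_comm]

lemma krawtchoukSum_one (v : Fin n → ZMod 2) : krawtchoukSum n 1 v = n - 2 * hammingNorm v := by
  have h := mul_krawtchoukSum v 0
  rw [sum_sphere_sum_add_single (walsh · v), krawtchoukSum_zero] at h
  simpa [krawtchoukSum] using h.symm

lemma krawtchoukSum_recurrence (v : Fin n → ZMod 2) (i : ℕ) :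
    (n - 2 * hammingNorm v) * krawtchoukSum n (i + 1) v =
      (i + 2) * krawtchoukSum n (i + 2) v + (n - i) * krawtchoukSum n i v := by
  rw [mul_krawtchoukSum, sum_sphere_sum_add_single (walsh · v)]
  have hlower : ∑ w ∈ univ.filter (fun w => hammingNorm w + 1 = i + 1),
      ((n - hammingNorm w : ℕ) : ℝ) * walsh w v = (n - i) * krawtchoukSum n i v := by
    rw [krawtchoukSum, mul_sum]
    refine sum_congr (by simp [sphere]) fun w hw => ?_
    have hw : hammingNorm w = i := by simpa [sphere] using hw
    rw [Nat.cast_sub (hw ▸ hammingNorm_le_card_fintype.trans_eq (Fintype.card_fin n)), hw]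
  change _ * krawtchoukSum n (i + 2) v + _ = _
  rw [hlower]
  push_cast
  ring

lemma kraw_eq_of_recurrence {t : ℝ} {f : ℕ → ℝ} (h0 : f 0 = 1) (h1 : 1 < n → f 1 = t)
    (hrec : ∀ i, i + 2 < n → (n - (i + 1)) * f (i + 2) = n * t * f (i + 1) - (i + 1) * f i) :
    ∀ i < n, kraw n i t = f i := by
  intro i
  induction i using Nat.twoStepInduction with
  | zero => intro _; rw [h0]; rfl
  | one => intro hn; rw [h1 hn]; rfl
  | more i ih₀ ih₁ =>
    intro hi
    have hne : (n : ℝ) - (i + 1) ≠ 0 := by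
      have : (i : ℝ) + 1 < n := by exact_mod_cast (by omega : i + 1 < n)
      linarith
    rw [kraw, ih₀ (by omega), ih₁ (by omega), div_eq_iff hne, ← hrec i hi, mul_comm]

lemma cast_choose_succ_mul {k : ℕ} (hk : k ≤ n) :
    (n.choose (k + 1) : ℝ) * (k + 1) = n.choose k * (n - k) := by
  have h := congrArg (Nat.cast (R := ℝ)) (Nat.choose_succ_right_eq n k)
  push_cast [Nat.cast_sub hk] at h
  exact h

lemma kraw_eq_krawtchoukSum (v : Fin n → ZMod 2) {i : ℕ} (hi : i < n) :
    kraw n i (1 - 2 * hammingNorm v / n) = krawtchoukSum n i v / n.choose i := by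
  have hn : (n : ℝ) ≠ 0 := by exact_mod_cast (by omega : n ≠ 0)
  refine kraw_eq_of_recurrence (f := fun i => krawtchoukSum n i v / n.choose i)
    (by simp [krawtchoukSum_zero]) (fun _ => ?_) (fun k hk => ?_) i hi
  · rw [krawtchoukSum_one, Nat.choose_one_right]
    field_simp
  · have hC (m : ℕ) (hm : m ≤ n) : (n.choose m : ℝ) ≠ 0 :=
      Nat.cast_ne_zero.2 (Nat.choose_pos hm).ne'
    have hC₀ := hC k (by omega)
    have hC₁ := hC (k + 1) (by omega)
    have hC₂ := hC (k + 2) (by omega)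
    have hrec := krawtchoukSum_recurrence v k
    have hB₁ := cast_choose_succ_mul (n := n) (k := k) (by omega)
    have hB₂ := cast_choose_succ_mul (n := n) (k := k + 1) (by omega)
    have ht : (n : ℝ) * (1 - 2 * hammingNorm v / n) = n - 2 * hammingNorm v := by field_simp
    simp only [ht]
    field_simp
    push_cast at hB₂ ⊢
    linear_combination -(n.choose k : ℝ) * (n.choose (k + 2)) * hrec
      - krawtchoukSum n (k + 2) v * n.choose k * hB₂ + krawtchoukSum n k v * n.choose (k + 2) * hB₁

lemma ip_eq (x y : Fin n → ZMod 2) : ip n x y = 1 - 2 * hammingNorm (x + y) / n := by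
  have hneg : -x = x := funext fun j => ZMod.neg_eq_self_mod_two (x j)
  rw [ip, hammingDist_eq_hammingNorm, hneg]

lemma moment_eq_sum_sq (C : Finset (Fin n → ZMod 2)) {i : ℕ} (hi : i < n) :
    moment n C i = (∑ z ∈ sphere n i, (∑ x ∈ C, walsh z x) ^ 2) / n.choose i := by
  simp only [moment, ip_eq, kraw_eq_krawtchoukSum _ hi, krawtchoukSum, AddChar.map_add_eq_mul,
    ← sum_div, sq, sum_mul_sum]
  congr 1
  conv_rhs => rw [sum_comm]
  exact sum_congr rfl fun x _ => sum_comm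

def IsAntipodalHalf (D C : Finset (Fin n → ZMod 2)) : Prop :=
  C ⊆ D ∧ ∀ x ∈ D, Xor (x ∈ C) (antip x ∈ C)

lemma IsAntipodalHalf.sum_eq_sum_add_antip {β : Type*} [AddCommMonoid β]
    {C D : Finset (Fin n → ZMod 2)} (hC : IsAntipodalHalf D C) (hD : ∀ x ∈ D, antip x ∈ D)
    (f : (Fin n → ZMod 2) → β) :
    ∑ x ∈ D, f x = ∑ x ∈ C, (f x + f (antip x)) := by
  obtain ⟨hCD, hpair⟩ := hC
  rw [sum_add_distrib, ← sum_sdiff hCD, add_comm]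
  congr 1
  refine sum_nbij' antip antip (fun x hx => ?_) (fun x hx => ?_)
    (fun x _ => antip_antip x) (fun x _ => antip_antip x) (fun x _ => by rw [antip_antip])
  · rw [mem_sdiff] at hx
    exact (hpair x hx.1).elim (fun h => absurd h.1 hx.2) And.left
  · exact mem_sdiff.2 ⟨hD x (hCD hx), (hpair x (hCD hx)).elim And.right fun h => absurd hx h.2⟩

lemma antip_mem_evenCode (hn : Even n) {x : Fin n → ZMod 2} (hx : x ∈ evenCode n) :
    antip x ∈ evenCode n := by
  simp only [evenCode, mem_filter, mem_univ, true_and] at hx ⊢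
  rw [← hammingNorm_antip_add_hammingNorm x, Nat.even_add] at hn
  exact hn.2 hx

lemma hammingNorm_one : hammingNorm (1 : Fin n → ZMod 2) = n := by
  simpa [antip_eq_add_one] using hammingNorm_antip_add_hammingNorm (0 : Fin n → ZMod 2)

namespace IsAntipodalHalf

variable {C : Finset (Fin n → ZMod 2)}

lemma card_eq (hC : IsAntipodalHalf (evenCode n) C) (hn : Even n) (hn₀ : 0 < n) :
    #C = 2 ^ (n - 2) := by
  have h := hC.sum_eq_sum_add_antip (fun _ => antip_mem_evenCode hn) fun _ => 1
  simp only [sum_const, smul_eq_mul, card_evenCode hn₀] at h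
  obtain ⟨m, rfl⟩ : ∃ m, n = m + 2 := ⟨n - 2, by obtain ⟨k, rfl⟩ := hn; omega⟩
  rw [show m + 2 - 1 = m + 1 by omega, pow_succ] at h
  simpa using h.symm

lemma sum_walsh_eq_zero (hC : IsAntipodalHalf (evenCode n) C) (hn : Even n) {z : Fin n → ZMod 2}
    (hz : Even (hammingNorm z)) (hz0 : z ≠ 0) (hz1 : z ≠ 1) : ∑ x ∈ C, walsh z x = 0 := by
  have h := hC.sum_eq_sum_add_antip (fun _ => antip_mem_evenCode hn) (walsh z)
  simp only [sum_walsh_evenCode hz0 hz1, walsh_antip, hz.neg_one_pow, mul_one, ← two_mul,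
    ← mul_sum] at h
  linarith

lemma moment_eq_zero (hC : IsAntipodalHalf (evenCode n) C) (hn : Even n) {j : ℕ} (hj : 1 ≤ j)
    (hjn : 2 * j < n) : moment n C (2 * j) = 0 := by
  rw [moment_eq_sum_sq C hjn]
  refine div_eq_zero_iff.2 (Or.inl (sum_eq_zero fun z hz => ?_))
  have hz : hammingNorm z = 2 * j := by simpa [sphere] using hz
  have hz0 : z ≠ 0 := fun h => by simp [h] at hz; omega
  have hz1 : z ≠ 1 := fun h => by rw [h, hammingNorm_one] at hz; omega
  rw [hC.sum_walsh_eq_zero hn (hz ▸ even_two_mul j) hz0 hz1]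
  norm_num

end IsAntipodalHalf

end BinaryCode

lemma sum_range_choose_two_mul_sub_one {l : ℕ} (hl : 1 ≤ l) :
    ∑ i ∈ range l, (2 * l - 1).choose i = 2 ^ (2 * l - 2) := by
  obtain ⟨m, rfl⟩ : ∃ m, l = m + 1 := ⟨l - 1, by omega⟩
  rw [show 2 * (m + 1) - 1 = 2 * m + 1 by omega, show 2 * (m + 1) - 2 = 2 * m by omega, pow_mul,
    Nat.sum_range_choose_halfway]
  norm_num

open BinaryCode in
/-- halving the even-weight code of length `n = 2ℓ` produces a tight
`(ℓ−1, ℓ−1)`-design of cardinality `2^{2ℓ−2} = ∑_{i=0}^{ℓ−1} C(2ℓ−1, i)`. -/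
theorem stmt_4 (l : ℕ) (hl : 2 ≤ l)
    (C : Finset (Fin (2 * l) → ZMod 2))
    (hCD : C ⊆ Finset.univ.filter (fun x : Fin (2 * l) → ZMod 2 => Even (hammingNorm x)))
    (hpair : ∀ x ∈ Finset.univ.filter (fun x : Fin (2 * l) → ZMod 2 => Even (hammingNorm x)),
        Xor' (x ∈ C) (antip x ∈ C)) :
    IsKKDesign (2 * l) (l - 1) C ∧ C.card = 2 ^ (2 * l - 2) ∧
      C.card = ∑ i ∈ Finset.range l, (2 * l - 1).choose i := by
  have hn : Even (2 * l) := even_two_mul l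
  have hC : IsAntipodalHalf (evenCode (2 * l)) C := ⟨hCD, hpair⟩
  have hcard := hC.card_eq hn (by omega)
  refine ⟨⟨card_pos.1 (by rw [hcard]; positivity), fun j hj hjl => ?_⟩, hcard,
    hcard.trans (sum_range_choose_two_mul_sub_one (by omega)).symm⟩
  exact hC.moment_eq_zero hn hj (by omega)
end

section
/- Let k be a positive integer with 1 ≤ k ≤ n/2, let f_0, f_1, …, f_n be real numbers with f_0 > 0, with f_j ≤ 0 for every odd j with 1 ≤ j ≤ n and for every j with 2k+1 ≤ j ≤ n, and set f(t) := ∑_{j=0}^n f_j·Q_j^{(n)}(t). Suppose f(t) ≥ 0 for every t ∈ T_n := {−1 + 2i/n : i = 0, 1, …, n}. Then every (k,k)-design C ⊆ F_2^n satisfies |C| ≥ f(1)/f_0. -/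
open Finset

noncomputable def eps (a : ZMod 2) : ℝ := if a = 0 then 1 else -1

lemma eps_cases : ∀ a : ZMod 2, a = 0 ∨ a = 1 := by decide

lemma eps_add (a b : ZMod 2) : eps (a + b) = eps a * eps b := by
  rcases eps_cases a with ha | ha <;> rcases eps_cases b with hb | hb <;>
    subst ha <;> subst hb <;> norm_num [eps] <;> decide

noncomputable def Sfun (n j : ℕ) (w : Fin n → ZMod 2) : ℝ :=
  ∑ z ∈ (univ : Finset (Fin n)).powersetCard j, ∏ i ∈ z, eps (w i)

lemma reindex (n j : ℕ) (G : Finset (Fin n) → Fin n → ℝ) :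
    ∑ z ∈ (univ : Finset (Fin n)).powersetCard j, ∑ a ∈ zᶜ, G (insert a z) a
    = ∑ z ∈ (univ : Finset (Fin n)).powersetCard (j+1), ∑ a ∈ z, G z a := by
  rw [Finset.sum_sigma' _ (fun z => zᶜ), Finset.sum_sigma' _ (fun z => z)]
  refine Finset.sum_nbij' (fun p => ⟨insert p.2 p.1, p.2⟩) (fun p => ⟨p.1.erase p.2, p.2⟩)
    ?_ ?_ ?_ ?_ ?_
  · rintro ⟨z, a⟩ h
    simp only [Finset.mem_sigma, Finset.mem_powersetCard, Finset.mem_compl] at h ⊢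
    refine ⟨⟨by simp, ?_⟩, Finset.mem_insert_self _ _⟩
    rw [Finset.card_insert_of_notMem h.2, h.1.2]
  · rintro ⟨z, a⟩ h
    simp only [Finset.mem_sigma, Finset.mem_powersetCard, Finset.mem_compl] at h ⊢
    refine ⟨⟨by simp, ?_⟩, Finset.notMem_erase _ _⟩
    rw [Finset.card_erase_of_mem h.2, h.1.2]; rfl
  · rintro ⟨z, a⟩ h
    simp only [Finset.mem_sigma, Finset.mem_compl] at h
    simp [Finset.erase_insert h.2]
  · rintro ⟨z, a⟩ h
    simp only [Finset.mem_sigma] at h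
    simp [Finset.insert_erase h.2]
  · rintro ⟨z, a⟩ h; rfl

lemma S_one (n : ℕ) (w : Fin n → ZMod 2) : Sfun n 1 w = ∑ a : Fin n, eps (w a) := by
  rw [Sfun, Finset.powersetCard_one, Finset.sum_map]
  simp

lemma S_rec (n j : ℕ) (w : Fin n → ZMod 2) :
    Sfun n 1 w * Sfun n (j+1) w
    = ((j:ℝ)+2) * Sfun n (j+2) w + ((n - j : ℕ) : ℝ) * Sfun n j w := by
  rw [S_one, Sfun, Finset.mul_sum]
  have main : ∀ z ∈ (univ : Finset (Fin n)).powersetCard (j+1),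
      (∑ a : Fin n, eps (w a)) * ∏ i ∈ z, eps (w i)
      = (∑ a ∈ z, ∏ i ∈ z.erase a, eps (w i)) + ∑ a ∈ zᶜ, ∏ i ∈ insert a z, eps (w i) := by
    intro z hz
    rw [← Finset.sum_add_sum_compl z (fun a => eps (w a)), add_mul, Finset.sum_mul,
      Finset.sum_mul]
    congr 1
    · refine Finset.sum_congr rfl fun a ha => ?_
      rw [← Finset.mul_prod_erase z _ ha, ← mul_assoc]
      have : eps (w a) * eps (w a) = 1 := by
        rcases eps_cases (w a) with h | h <;> rw [h] <;> norm_num [eps]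
      rw [this, one_mul]
    · refine Finset.sum_congr rfl fun a ha => ?_
      rw [Finset.prod_insert (Finset.mem_compl.mp ha)]
  rw [Finset.sum_congr rfl main, Finset.sum_add_distrib]
  have h1 : ∑ z ∈ (univ : Finset (Fin n)).powersetCard (j+1),
      ∑ a ∈ z, ∏ i ∈ z.erase a, eps (w i)
      = ((n - j : ℕ) : ℝ) * Sfun n j w := by
    rw [← reindex n j (fun z a => ∏ i ∈ z.erase a, eps (w i)), Sfun, Finset.mul_sum]
    refine Finset.sum_congr rfl fun z hz => ?_
    rw [Finset.mem_powersetCard] at hz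
    have : ∀ a ∈ zᶜ, (∏ i ∈ (insert a z).erase a, eps (w i)) = ∏ i ∈ z, eps (w i) := by
      intro a ha
      rw [Finset.erase_insert (Finset.mem_compl.mp ha)]
    rw [Finset.sum_congr rfl this, Finset.sum_const, Finset.card_compl, hz.2,
      Fintype.card_fin, nsmul_eq_mul]
  have h2 : ∑ z ∈ (univ : Finset (Fin n)).powersetCard (j+1),
      ∑ a ∈ zᶜ, ∏ i ∈ insert a z, eps (w i)
      = ((j:ℝ)+2) * Sfun n (j+2) w := by
    rw [reindex n (j+1) (fun z _ => ∏ i ∈ z, eps (w i)), Sfun, Finset.mul_sum]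
    refine Finset.sum_congr rfl fun z hz => ?_
    rw [Finset.mem_powersetCard] at hz
    rw [Finset.sum_const, hz.2, nsmul_eq_mul]
    push_cast; ring
  rw [h1, h2]; ring

lemma S_one_eq (n : ℕ) (x y : Fin n → ZMod 2) :
    Sfun n 1 (fun i => x i + y i) = (n:ℝ) - 2 * hammingDist x y := by
  rw [S_one]
  have hz : ∀ a b : ZMod 2, a + b = 0 ↔ a = b := by decide
  have : ∀ a : Fin n, eps (x a + y a) = 1 - 2 * (if x a ≠ y a then (1:ℝ) else 0) := by
    intro a
    by_cases h : x a = y a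
    · have h0 : x a + y a = 0 := (hz _ _).mpr h
      simp only [eps]
      rw [if_pos h0]
      simp [h]
    · have h0 : ¬ (x a + y a = 0) := fun hc => h ((hz _ _).mp hc)
      simp only [eps]
      rw [if_neg h0]
      norm_num [h]
  rw [Finset.sum_congr rfl fun a _ => this a, Finset.sum_sub_distrib, ← Finset.mul_sum,
    Finset.sum_boole, Finset.sum_const]
  simp [hammingDist, Finset.card_univ]

lemma kraw_mul_choose (n : ℕ) (hn : 0 < n) (x y : Fin n → ZMod 2) :
    ∀ j, j ≤ n → kraw n j (ip n x y) * (n.choose j : ℝ) = Sfun n j (fun i => x i + y i) := by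
  have hnR : (n:ℝ) ≠ 0 := Nat.cast_ne_zero.mpr hn.ne'
  intro j
  induction j using Nat.strong_induction_on with
  | _ j IH =>
    match j with
    | 0 =>
      intro _
      simp [kraw, Sfun, eps]
    | 1 =>
      intro _
      rw [S_one_eq]
      show ip n x y * (n.choose 1 : ℝ) = _
      rw [Nat.choose_one_right, ip]
      field_simp
    | (j+2) =>
      intro hj
      set t := ip n x y with ht
      set w : Fin n → ZMod 2 := fun i => x i + y i with hw
      have h1 : kraw n (j+1) t * (n.choose (j+1) : ℝ) = Sfun n (j+1) w :=
        IH (j+1) (by omega) (by omega)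
      have h2 : kraw n j t * (n.choose j : ℝ) = Sfun n j w :=
        IH j (by omega) (by omega)
      have hS1 : Sfun n 1 w = (n:ℝ) * t := by
        rw [hw, S_one_eq, ht, ip]
        field_simp
      have hrec := S_rec n j w
      rw [hS1] at hrec
      have hnj : ((n - j : ℕ) : ℝ) = (n:ℝ) - j := by
        rw [Nat.cast_sub (by omega)]
      rw [hnj] at hrec
      have hc1 : ((n.choose (j+2)) : ℝ) * ((j:ℝ)+2) = (n.choose (j+1) : ℝ) * ((n:ℝ)-(j:ℝ)-1) := by
        have := Nat.choose_succ_right_eq n (j+1)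
        have hcast : ((n - (j+1) : ℕ) : ℝ) = (n:ℝ) - (j:ℝ) - 1 := by
          rw [Nat.cast_sub (by omega)]; push_cast; ring
        calc ((n.choose (j+2)) : ℝ) * ((j:ℝ)+2)
            = ((n.choose (j+2) * (j+2) : ℕ) : ℝ) := by push_cast; ring
          _ = ((n.choose (j+1) * (n - (j+1)) : ℕ) : ℝ) := by rw [this]
          _ = (n.choose (j+1) : ℝ) * ((n:ℝ)-(j:ℝ)-1) := by push_cast [Nat.cast_sub (show j+1 ≤ n by omega)]; ring
      have hc0 : ((n.choose (j+1)) : ℝ) * ((j:ℝ)+1) = (n.choose j : ℝ) * ((n:ℝ)-(j:ℝ)) := by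
        have := Nat.choose_succ_right_eq n j
        calc ((n.choose (j+1)) : ℝ) * ((j:ℝ)+1)
            = ((n.choose (j+1) * (j+1) : ℕ) : ℝ) := by push_cast; ring
          _ = ((n.choose j * (n - j) : ℕ) : ℝ) := by rw [this]
          _ = (n.choose j : ℝ) * ((n:ℝ)-(j:ℝ)) := by push_cast [Nat.cast_sub (show j ≤ n by omega)]; ring
      have hden : (n:ℝ) - ((j:ℝ)+1) ≠ 0 := by
        have : (j:ℝ) + 2 ≤ (n:ℝ) := by exact_mod_cast hj
        intro h; nlinarith
      show (((n:ℝ) * t * kraw n (j+1) t - ((j:ℝ)+1) * kraw n j t) / ((n:ℝ) - ((j:ℝ)+1)))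
          * (n.choose (j+2) : ℝ) = Sfun n (j+2) w
      rw [div_mul_eq_mul_div, div_eq_iff hden]
      have hj2 : ((j:ℝ)+2) ≠ 0 := by positivity
      refine mul_left_cancel₀ hj2 ?_
      linear_combination ((((n:ℝ)*t*kraw n (j+1) t - ((j:ℝ)+1)*kraw n j t)) * hc1
        + ((n:ℝ)-(j:ℝ)-1) * ((n:ℝ)*t*h1 - kraw n j t * hc0 - ((n:ℝ)-(j:ℝ))*h2 + hrec))


lemma moment_mul_choose (n j : ℕ) (hn : 0 < n) (hj : j ≤ n) (C : Finset (Fin n → ZMod 2)) :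
    moment n C j * (n.choose j : ℝ)
      = ∑ z ∈ (univ : Finset (Fin n)).powersetCard j, (∑ x ∈ C, ∏ i ∈ z, eps (x i))^2 := by
  rw [moment, Finset.sum_mul]
  have step1 : ∀ x ∈ C, (∑ y ∈ C, kraw n j (ip n x y)) * (n.choose j : ℝ)
      = ∑ y ∈ C, ∑ z ∈ (univ : Finset (Fin n)).powersetCard j,
          (∏ i ∈ z, eps (x i)) * (∏ i ∈ z, eps (y i)) := by
    intro x _
    rw [Finset.sum_mul]
    refine Finset.sum_congr rfl fun y _ => ?_
    rw [kraw_mul_choose n hn x y j hj, Sfun]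
    refine Finset.sum_congr rfl fun z _ => ?_
    rw [← Finset.prod_mul_distrib]
    exact Finset.prod_congr rfl fun i _ => eps_add _ _
  rw [Finset.sum_congr rfl step1]
  rw [Finset.sum_congr rfl fun x (_ : x ∈ C) => Finset.sum_comm (s := C)
    (t := (univ : Finset (Fin n)).powersetCard j), Finset.sum_comm]
  refine Finset.sum_congr rfl fun z _ => ?_
  rw [sq, Finset.sum_mul_sum]

lemma moment_nonneg (n j : ℕ) (hn : 0 < n) (hj : j ≤ n) (C : Finset (Fin n → ZMod 2)) :
    0 ≤ moment n C j := by
  have h := moment_mul_choose n j hn hj C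
  have hc : (0:ℝ) < (n.choose j : ℝ) := by exact_mod_cast Nat.choose_pos hj
  have hnn : 0 ≤ moment n C j * (n.choose j : ℝ) := by
    rw [h]; exact Finset.sum_nonneg fun z _ => sq_nonneg _
  nlinarith

lemma ip_self (n : ℕ) (x : Fin n → ZMod 2) : ip n x x = 1 := by
  simp [ip, hammingDist_self]

lemma moment_zero (n : ℕ) (C : Finset (Fin n → ZMod 2)) :
    moment n C 0 = (C.card : ℝ)^2 := by
  have : ∀ x y : Fin n → ZMod 2, kraw n 0 (ip n x y) = 1 := fun _ _ => rfl
  simp only [moment, this, Finset.sum_const, nsmul_eq_mul, mul_one]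
  ring


/-- the general linear programming bound for `(k,k)`-designs. -/
theorem stmt_5 (n k : ℕ) (hn : 0 < n) (hk : 1 ≤ k) (hkn : 2 * k ≤ n)
    (f : ℕ → ℝ) (hf0 : 0 < f 0)
    (hfodd : ∀ j : ℕ, 1 ≤ j → j ≤ n → Odd j → f j ≤ 0)
    (hfbig : ∀ j : ℕ, 2 * k + 1 ≤ j → j ≤ n → f j ≤ 0)
    (hfpos : ∀ i : ℕ, i ≤ n →
      0 ≤ ∑ j ∈ Finset.range (n + 1), f j * kraw n j (-1 + 2 * (i : ℝ) / (n : ℝ)))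
    (C : Finset (Fin n → ZMod 2)) (hC : IsKKDesign n k C) :
    (∑ j ∈ Finset.range (n + 1), f j * kraw n j 1) / f 0 ≤ (C.card : ℝ) := by
  obtain ⟨hne, hdes⟩ := hC
  have hN : (0:ℝ) < C.card := by exact_mod_cast Finset.card_pos.mpr hne
  set N : ℝ := (C.card : ℝ) with hNdef
  set F1 : ℝ := ∑ j ∈ Finset.range (n + 1), f j * kraw n j 1 with hF1
  have hg : ∀ x y : Fin n → ZMod 2,
      0 ≤ ∑ j ∈ Finset.range (n+1), f j * kraw n j (ip n x y) := by
    intro x y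
    have hd : hammingDist x y ≤ n := by
      simpa using (hammingDist_le_card_fintype (x := x) (y := y))
    have h := hfpos (n - hammingDist x y) (by omega)
    have hip : ip n x y = -1 + 2 * ((n - hammingDist x y : ℕ) : ℝ) / (n : ℝ) := by
      rw [ip, Nat.cast_sub hd]
      have hnR : (n:ℝ) ≠ 0 := Nat.cast_ne_zero.mpr hn.ne'
      field_simp
      ring
    rw [hip]
    exact h
  have hA1 : N * F1 ≤ ∑ x ∈ C, ∑ y ∈ C, ∑ j ∈ Finset.range (n+1),
      f j * kraw n j (ip n x y) := by
    have : N * F1 = ∑ x ∈ C, ∑ j ∈ Finset.range (n+1), f j * kraw n j (ip n x x) := by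
      rw [Finset.sum_congr rfl fun x (_ : x ∈ C) => by rw [ip_self]]
      rw [Finset.sum_const, nsmul_eq_mul]
    rw [this]
    refine Finset.sum_le_sum fun x hx => ?_
    exact Finset.single_le_sum (fun y _ => hg x y) hx
  have hA2 : ∑ x ∈ C, ∑ y ∈ C, ∑ j ∈ Finset.range (n+1), f j * kraw n j (ip n x y)
      = ∑ j ∈ Finset.range (n+1), f j * moment n C j := by
    rw [Finset.sum_congr rfl fun x (_ : x ∈ C) => Finset.sum_comm (s := C)
      (t := Finset.range (n+1)), Finset.sum_comm]
    refine Finset.sum_congr rfl fun j _ => ?_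
    rw [moment, Finset.mul_sum]
    refine Finset.sum_congr rfl fun x _ => ?_
    rw [Finset.mul_sum]
  have hA3 : ∑ j ∈ Finset.range (n+1), f j * moment n C j ≤ f 0 * N^2 := by
    rw [Finset.sum_range_succ']
    have h0 : f 0 * moment n C 0 = f 0 * N^2 := by rw [moment_zero]
    have hrest : ∑ i ∈ Finset.range n, f (i+1) * moment n C (i+1) ≤ 0 := by
      refine Finset.sum_nonpos fun i hi => ?_
      have hi' : i + 1 ≤ n := by
        rw [Finset.mem_range] at hi; omega
      have hM : 0 ≤ moment n C (i+1) := moment_nonneg n (i+1) hn hi' C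
      rcases Nat.even_or_odd (i+1) with he | ho
      · obtain ⟨m, hm⟩ := he
        have hm2 : i + 1 = 2 * m := by omega
        have hm1 : 1 ≤ m := by omega
        by_cases hmk : m ≤ k
        · rw [hm2, hdes m hm1 hmk, mul_zero]
        · have : 2 * k + 1 ≤ i + 1 := by omega
          exact mul_nonpos_of_nonpos_of_nonneg (hfbig (i+1) this hi') hM
      · exact mul_nonpos_of_nonpos_of_nonneg (hfodd (i+1) (by omega) hi' ho) hM
    linarith
  rw [div_le_iff₀ hf0]
  nlinarith [hA1, hA2, hA3, hN]
end

section
/- If there exists a tight (3,3)-design in F_2^n (n ≥ 6), i.e. a (3,3)-design of cardinality ∑_{i=0}^3 C(n−1,i) = n(n² − 3n + 8)/6, then n ≡ 8 (mod 16) or n ≡ 107 (mod 128), and 3n − 8 = m² for some positive integer m ≥ 4 which either is divisible by 4 and not divisible by 3, or satisfies m ≡ 43 (mod 64). -/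
open Finset

/-!
Write `s = n − 2 d(x,y)`, so that `⟨x,y⟩ = s / n`. For `P(s) = s (s² − (3n − 8))`, the expansion of
`P(s)²` in `Q₀, Q₂, Q₄, Q₆` has constant term `6n(n² − 3n + 8) = 36|C|`, so the vanishing moments
give `∑_{x,y} P(s)² = 36|C|³`, which is already the contribution of the diagonal. Hence distinct
codewords have `s = 0` or `s² = 3n − 8`. With this distance distribution, `M₂ = 0` forces `n` even,
and the combination of `M₂` and `M₄` that kills `s = 0` gives `|C| n²(n − 1)(n − 2) = 6 ∑_{x ≠ y} s²`,
so `m² = 3n − 8`, where `m = |s| ≠ 0` for some pair, divides `|C| n²(n − 1)(n − 2)`. As `n` is even,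
so is `m`; if `m ≡ 2 (mod 4)`, an odd prime `p ∣ m` is coprime
to `n`, `n − 2` and `|C| = n(n² − m²)/6`, so `p² ∣ n − 1` and `p² ∣ 3(n − 1) − m² = 5`, which is
absurd. Thus `4 ∣ m`, whence `n ≡ 8 (mod 16)`, and `3 ∤ m` since `m² ≡ 1 (mod 3)`.
-/

lemma six_mul_sum_range_four_choose {n : ℕ} (hn : 1 ≤ n) :
    6 * ((∑ i ∈ range 4, (n - 1).choose i : ℕ) : ℤ) = n * (n ^ 2 - 3 * n + 8) := by
  obtain ⟨k, rfl⟩ := Nat.exists_eq_add_of_le' hn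
  qify
  simp only [add_tsub_cancel_right, Nat.cast_choose_eq_descPochhammer_div, sum_range_succ,
    range_one, sum_singleton, descPochhammer_zero, Polynomial.eval_one, Nat.factorial,
    Nat.cast_one, ne_eq, one_ne_zero, not_false_eq_true, div_self, descPochhammer_one,
    Polynomial.eval_X, Nat.succ_eq_add_one, zero_add, mul_one, div_one, descPochhammer_succ_eval,
    Nat.reduceAdd, Nat.cast_ofNat, Nat.reduceMul]
  ring

section Krawtchouk

variable {n : ℕ}

lemma kraw_two_mul (hn : 2 ≤ n) (t : ℝ) :
    (n : ℝ) * (n - 1) * kraw n 2 t = (n * t) ^ 2 - n := by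
  have : (n : ℝ) - 1 ≠ 0 := by
    have : (2 : ℝ) ≤ n := by exact_mod_cast hn
    linarith
  simp only [kraw]
  norm_num
  field_simp

lemma kraw_four_mul (hn : 4 ≤ n) (t : ℝ) :
    (n : ℝ) * (n - 1) * (n - 2) * (n - 3) * kraw n 4 t =
      (n * t) ^ 4 + (8 - 6 * n) * (n * t) ^ 2 + 3 * n ^ 2 - 6 * n := by
  have hn' : (4 : ℝ) ≤ n := by exact_mod_cast hn
  have h1 : (n : ℝ) - 1 ≠ 0 := by linarith
  have h2 : (n : ℝ) - 2 ≠ 0 := by linarith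
  have h3 : (n : ℝ) - 3 ≠ 0 := by linarith
  simp only [kraw]
  norm_num
  field_simp
  ring

lemma sq_mul_sq_sub_eq_kraw (hn : 6 ≤ n) (t : ℝ) :
    (n * t * ((n * t) ^ 2 - (3 * n - 8))) ^ 2 =
      6 * n * (n ^ 2 - 3 * n + 8)
        + 18 * n * (n - 1) * (n ^ 2 - 3 * n + 4) * kraw n 2 t
        + 3 * (3 * n - 8) * n * (n - 1) * (n - 2) * (n - 3) * kraw n 4 t
        + n * (n - 1) * (n - 2) * (n - 3) * (n - 4) * (n - 5) * kraw n 6 t := by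
  have hn' : (6 : ℝ) ≤ n := by exact_mod_cast hn
  have h1 : (n : ℝ) - 1 ≠ 0 := by linarith
  have h2 : (n : ℝ) - 2 ≠ 0 := by linarith
  have h3 : (n : ℝ) - 3 ≠ 0 := by linarith
  have h4 : (n : ℝ) - 4 ≠ 0 := by linarith
  have h5 : (n : ℝ) - 5 ≠ 0 := by linarith
  simp only [kraw]
  norm_num
  field_simp
  ring

end Krawtchouk

lemma Finset.sum_sum_eq_sum_add_sum_sum_erase {α M : Type*} [DecidableEq α] [AddCommMonoid M]
    (C : Finset α) (f : α → α → M) :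
    ∑ x ∈ C, ∑ y ∈ C, f x y = ∑ x ∈ C, f x x + ∑ x ∈ C, ∑ y ∈ C.erase x, f x y := by
  rw [← Finset.sum_add_distrib]
  exact Finset.sum_congr rfl fun x hx => (Finset.add_sum_erase C (f x) hx).symm

lemma Finset.eq_zero_of_sum_sum_sq_eq_sum_sq {α R : Type*} [DecidableEq α] [CommRing R]
    [LinearOrder R] [IsStrictOrderedRing R] {C : Finset α} {f : α → α → R}
    (h : ∑ x ∈ C, ∑ y ∈ C, f x y ^ 2 = ∑ x ∈ C, f x x ^ 2)
    {x y : α} (hx : x ∈ C) (hy : y ∈ C) (hxy : x ≠ y) : f x y = 0 := by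
  rw [Finset.sum_sum_eq_sum_add_sum_sum_erase, add_eq_left] at h
  have hrow := (Finset.sum_eq_zero_iff_of_nonneg fun x _ =>
    Finset.sum_nonneg fun y _ => sq_nonneg (f x y)).1 h x hx
  exact pow_eq_zero_iff two_ne_zero |>.1 <|
    (Finset.sum_eq_zero_iff_of_nonneg fun y _ => sq_nonneg (f x y)).1 hrow y
      (Finset.mem_erase.2 ⟨hxy.symm, hy⟩)

/-- The inner product `n − 2 d(x,y)` of the `±1`-images of `x` and `y`. -/
def pmInner (n : ℕ) (x y : Fin n → ZMod 2) : ℤ := n - 2 * hammingDist x y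

section Moments

variable {n : ℕ} {C : Finset (Fin n → ZMod 2)}

lemma pmInner_self (x : Fin n → ZMod 2) : pmInner n x x = n := by
  simp [pmInner]

lemma natCast_mul_ip (hn : n ≠ 0) (x y : Fin n → ZMod 2) :
    (n : ℝ) * ip n x y = pmInner n x y := by
  have : (n : ℝ) ≠ 0 := Nat.cast_ne_zero.2 hn
  simp only [ip, pmInner]
  push_cast
  field_simp

lemma sum_sum_pmInner_eq_of_kraw_expansion (hn : n ≠ 0) {g : ℝ → ℝ} {a b c d : ℝ}
    (hg : ∀ t, g (n * t) = a + b * kraw n 2 t + c * kraw n 4 t + d * kraw n 6 t) :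
    ∑ x ∈ C, ∑ y ∈ C, g (pmInner n x y) =
      C.card ^ 2 * a + b * moment n C 2 + c * moment n C 4 + d * moment n C 6 := by
  simp only [← natCast_mul_ip hn, hg, moment, Finset.sum_add_distrib, ← Finset.mul_sum,
    Finset.sum_const, nsmul_eq_mul]
  ring

lemma sum_sum_pmInner_sq_sub_eq_zero (hn : 2 ≤ n) (h2 : moment n C 2 = 0) :
    ∑ x ∈ C, ∑ y ∈ C, (pmInner n x y ^ 2 - n) = 0 := by
  have := sum_sum_pmInner_eq_of_kraw_expansion (C := C) (g := fun s => s ^ 2 - n) (a := 0) (b := n * (n - 1))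
    (c := 0) (d := 0) (by omega) fun t => by linear_combination -kraw_two_mul hn t
  rw [h2] at this
  simp only [mul_zero, zero_mul, add_zero] at this
  exact_mod_cast this

lemma sum_sum_pmInner_sq_mul_eq_zero (hn : 4 ≤ n) (h2 : moment n C 2 = 0)
    (h4 : moment n C 4 = 0) :
    ∑ x ∈ C, ∑ y ∈ C, pmInner n x y ^ 2 * (pmInner n x y ^ 2 - 3 * n + 2) = 0 := by
  have := sum_sum_pmInner_eq_of_kraw_expansion (C := C) (g := fun s => s ^ 2 * (s ^ 2 - 3 * n + 2)) (a := 0)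
    (b := (3 * n - 6) * (n * (n - 1))) (c := n * (n - 1) * (n - 2) * (n - 3)) (d := 0)
    (by omega) fun t => by
      linear_combination -kraw_four_mul hn t - (3 * n - 6) * kraw_two_mul (n := n) (by omega) t
  rw [h2, h4] at this
  simp only [mul_zero, zero_mul, add_zero] at this
  exact_mod_cast this

lemma sum_sum_sq_pmInner_mul_eq (hn : 6 ≤ n) (h2 : moment n C 2 = 0)
    (h4 : moment n C 4 = 0) (h6 : moment n C 6 = 0) :
    ∑ x ∈ C, ∑ y ∈ C, (pmInner n x y * (pmInner n x y ^ 2 - (3 * n - 8))) ^ 2 =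
      (C.card : ℤ) ^ 2 * (6 * n * (n ^ 2 - 3 * n + 8)) := by
  have := sum_sum_pmInner_eq_of_kraw_expansion (C := C) (g := fun s => (s * (s ^ 2 - (3 * n - 8))) ^ 2)
    (a := 6 * n * (n ^ 2 - 3 * n + 8)) (b := 18 * n * (n - 1) * (n ^ 2 - 3 * n + 4))
    (c := 3 * (3 * n - 8) * n * (n - 1) * (n - 2) * (n - 3))
    (d := n * (n - 1) * (n - 2) * (n - 3) * (n - 4) * (n - 5)) (by omega)
    (sq_mul_sq_sub_eq_kraw hn)
  rw [h2, h4, h6] at this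
  simp only [mul_zero, add_zero] at this
  exact_mod_cast this

lemma pmInner_eq_zero_or_sq_eq (hn : 6 ≤ n) (h2 : moment n C 2 = 0) (h4 : moment n C 4 = 0)
    (h6 : moment n C 6 = 0) (hK : 6 * (C.card : ℤ) = n * (n ^ 2 - 3 * n + 8))
    {x y : Fin n → ZMod 2} (hx : x ∈ C) (hy : y ∈ C) (hxy : x ≠ y) :
    pmInner n x y = 0 ∨ pmInner n x y ^ 2 = 3 * n - 8 := by
  have hdiag : ∑ x ∈ C, ∑ y ∈ C, (pmInner n x y * (pmInner n x y ^ 2 - (3 * n - 8))) ^ 2 =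
      ∑ x ∈ C, (pmInner n x x * (pmInner n x x ^ 2 - (3 * n - 8))) ^ 2 := by
    simp only [sum_sum_sq_pmInner_mul_eq hn h2 h4 h6, pmInner_self, Finset.sum_const,
      nsmul_eq_mul]
    linear_combination (C.card : ℤ) * (n * (n ^ 2 - 3 * n + 8)) * hK
  have := Finset.eq_zero_of_sum_sum_sq_eq_sum_sq hdiag hx hy hxy
  rcases mul_eq_zero.1 this with h | h
  · exact Or.inl h
  · exact Or.inr (by linear_combination h)

lemma even_of_pmInner_eq_zero_or_sq_eq (hn : 4 ≤ n) (hC : C.Nonempty) (h2 : moment n C 2 = 0)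
    (hoff : ∀ x ∈ C, ∀ y ∈ C, x ≠ y → pmInner n x y = 0 ∨ pmInner n x y ^ 2 = 3 * n - 8) :
    Even n := by
  by_contra hodd
  rw [Nat.not_even_iff_odd, Nat.odd_iff] at hodd
  -- for odd `n` no `s` vanishes, so every term of `M₂` is nonnegative and the diagonal ones positive
  have hne : ∀ x y : Fin n → ZMod 2, pmInner n x y ≠ 0 := fun x y h => by
    simp only [pmInner] at h
    omega
  have hsum := sum_sum_pmInner_sq_sub_eq_zero (by omega) h2
  rw [Finset.sum_sum_eq_sum_add_sum_sum_erase] at hsum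
  refine hsum.not_gt (add_pos_of_pos_of_nonneg ?_ ?_)
  · refine Finset.sum_pos (fun x _ => ?_) hC
    rw [pmInner_self]
    nlinarith
  · refine Finset.sum_nonneg fun x hx => Finset.sum_nonneg fun y hy => ?_
    obtain ⟨hyx, hy⟩ := Finset.mem_erase.1 hy
    rw [(hoff x hx y hy hyx.symm).resolve_left (hne x y)]
    omega

lemma exists_sq_eq_and_sq_dvd (hn : 4 ≤ n) (hC : C.Nonempty) (h2 : moment n C 2 = 0)
    (h4 : moment n C 4 = 0)
    (hoff : ∀ x ∈ C, ∀ y ∈ C, x ≠ y → pmInner n x y = 0 ∨ pmInner n x y ^ 2 = 3 * n - 8) :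
    ∃ s : ℤ, s ^ 2 = 3 * n - 8 ∧ s ^ 2 ∣ n ^ 2 * (n - 1) * (n - 2) * C.card := by
  have hterm : ∀ x ∈ C, ∀ y ∈ C.erase x,
      pmInner n x y ^ 2 * (pmInner n x y ^ 2 - 3 * n + 2) = -6 * pmInner n x y ^ 2 := by
    intro x hx y hy
    obtain ⟨hyx, hy⟩ := Finset.mem_erase.1 hy
    rcases hoff x hx y hy hyx.symm with h | h
    · simp [h]
    · linear_combination pmInner n x y ^ 2 * h
  have hkey : (n : ℤ) ^ 2 * (n - 1) * (n - 2) * C.card =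
      6 * ∑ x ∈ C, ∑ y ∈ C.erase x, pmInner n x y ^ 2 := by
    have hsum := sum_sum_pmInner_sq_mul_eq_zero (by omega) h2 h4
    rw [Finset.sum_sum_eq_sum_add_sum_sum_erase,
      Finset.sum_congr rfl fun x hx => Finset.sum_congr rfl (hterm x hx)] at hsum
    simp only [pmInner_self, Finset.sum_const, nsmul_eq_mul, ← Finset.mul_sum] at hsum
    linear_combination hsum
  obtain ⟨x, hx, y, hy, hxy, hs⟩ : ∃ x ∈ C, ∃ y ∈ C, x ≠ y ∧ pmInner n x y ≠ 0 := by
    by_contra! h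
    have hpos : 0 < (n : ℤ) ^ 2 * (n - 1) * (n - 2) * C.card := by
      have hcard : (0 : ℤ) < C.card := by exact_mod_cast hC.card_pos
      have hn : (4 : ℤ) ≤ n := by exact_mod_cast hn
      exact mul_pos (mul_pos (mul_pos (by positivity) (by linarith)) (by linarith)) hcard
    refine hpos.ne' (hkey.trans ?_)
    rw [Finset.sum_eq_zero fun x hx => Finset.sum_eq_zero fun y hy => ?_, mul_zero]
    obtain ⟨hyx, hy⟩ := Finset.mem_erase.1 hy
    rw [h x hx y hy hyx.symm, sq, mul_zero]
  have hs2 := (hoff x hx y hy hxy).resolve_left hs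
  refine ⟨pmInner n x y, hs2, hkey ▸ Dvd.dvd.mul_left (Finset.dvd_sum fun z hz =>
    Finset.dvd_sum fun w hw => ?_) 6⟩
  obtain ⟨hwz, hw⟩ := Finset.mem_erase.1 hw
  rcases hoff z hz w hw hwz.symm with h | h
  · simp [h]
  · rw [h, hs2]

end Moments

lemma four_dvd_of_sq_eq {n m K : ℤ} (hm : m ^ 2 = 3 * n - 8) (hm2 : 2 ∣ m) (hm_sq : m ^ 2 ≠ 4)
    (hK : 6 * K = n * (n ^ 2 - 3 * n + 8)) (hdvd : m ^ 2 ∣ n ^ 2 * (n - 1) * (n - 2) * K) :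
    4 ∣ m := by
  by_contra h4
  obtain ⟨b, hb⟩ := hm2
  obtain ⟨c, hc⟩ : Odd b := by
    rw [Int.odd_iff]
    omega
  obtain ⟨p, hp, hpb⟩ := Int.exists_prime_and_dvd (n := b) fun h => hm_sq <| by
    have := Int.natAbs_sq b
    rw [h, Nat.cast_one] at this
    linear_combination (m + 2 * b) * hb + 4 * this.symm
  have hpm : p ∣ m := hb ▸ dvd_mul_of_dvd_right hpb 2
  have hpm2 : p ^ 2 ∣ m ^ 2 := pow_dvd_pow_of_dvd hpm 2
  have hp2 : ¬ p ∣ 2 := fun h => hp.not_dvd_one <| by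
    simpa [hc] using dvd_sub hpb (dvd_mul_of_dvd_left h c)
  have hpn : ¬ p ∣ n := fun h => hp2 <| hp.dvd_of_dvd_pow (n := 3) <| by
    rw [show (2 : ℤ) ^ 3 = 3 * n - m ^ 2 by linear_combination hm]
    exact dvd_sub (h.mul_left 3) ((dvd_pow_self p two_ne_zero).trans hpm2)
  have hpn2 : ¬ p ∣ n - 2 := fun h => hp2 <| by
    rw [show (2 : ℤ) = 3 * (n - 2) - m ^ 2 by linear_combination hm]
    exact dvd_sub (h.mul_left 3) ((dvd_pow_self p two_ne_zero).trans hpm2)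
  have hpK : ¬ p ∣ K := fun h => by
    have : p ∣ n * ((n - m) * (n + m)) := by
      rw [show n * ((n - m) * (n + m)) = 6 * K by linear_combination -n * hm - hK]
      exact h.mul_left 6
    rcases hp.dvd_mul.1 this with h | h
    · exact hpn h
    rcases hp.dvd_mul.1 h with h | h
    · exact hpn (by simpa using dvd_add h hpm)
    · exact hpn (by simpa using dvd_sub h hpm)
  have hcop : IsCoprime (p ^ 2) (n ^ 2 * (n - 2) * K) :=
    (((hp.coprime_iff_not_dvd.2 hpn).pow_right.mul_right (hp.coprime_iff_not_dvd.2 hpn2)).mul_right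
      (hp.coprime_iff_not_dvd.2 hpK)).pow_left
  have hpn1 : p ^ 2 ∣ n - 1 := hcop.dvd_of_dvd_mul_right <| by
    rw [show (n - 1) * (n ^ 2 * (n - 2) * K) = n ^ 2 * (n - 1) * (n - 2) * K by ring]
    exact hpm2.trans hdvd
  obtain ⟨k, hk⟩ : p ^ 2 ∣ 5 := by
    rw [show (5 : ℤ) = 3 * (n - 1) - m ^ 2 by linear_combination hm]
    exact dvd_sub (hpn1.mul_left 3) hpm2
  have h5 : Prime (5 : ℤ) := Int.prime_iff_natAbs_prime.2 (by norm_num)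
  rcases h5.irreducible.isUnit_or_isUnit (show (5 : ℤ) = p * (p * k) by rw [hk]; ring) with h | h
  · exact hp.not_isUnit h
  · exact hp.not_isUnit (isUnit_of_mul_isUnit_left h)

/-- necessary conditions for the existence of a tight `(3,3)`-design. -/
theorem stmt_13 (n : ℕ) (hn : 6 ≤ n)
    (C : Finset (Fin n → ZMod 2)) (hC : C.Nonempty)
    (h2 : moment n C 2 = 0) (h4 : moment n C 4 = 0) (h6 : moment n C 6 = 0)
    (hcard : C.card = ∑ i ∈ Finset.range 4, (n - 1).choose i) :
    (n % 16 = 8 ∨ n % 128 = 107) ∧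
      ∃ m : ℕ, 4 ≤ m ∧ 3 * n - 8 = m ^ 2 ∧ ((4 ∣ m ∧ ¬ 3 ∣ m) ∨ m % 64 = 43) := by
  have hK : 6 * (C.card : ℤ) = n * (n ^ 2 - 3 * n + 8) :=
    hcard ▸ six_mul_sum_range_four_choose (by omega)
  have hoff : ∀ x ∈ C, ∀ y ∈ C, x ≠ y → pmInner n x y = 0 ∨ pmInner n x y ^ 2 = 3 * n - 8 :=
    fun _ hx _ hy hxy => pmInner_eq_zero_or_sq_eq hn h2 h4 h6 hK hx hy hxy
  obtain ⟨s, hs, hdvd⟩ := exists_sq_eq_and_sq_dvd (by omega) hC h2 h4 hoff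
  obtain ⟨k, hk⟩ := even_of_pmInner_eq_zero_or_sq_eq (by omega) hC h2 hoff
  have hs2 : 2 ∣ s := by
    have : Even (s ^ 2) := ⟨3 * k - 4, by rw [hs, hk]; push_cast; ring⟩
    exact even_iff_two_dvd.1 (Int.even_pow.1 this).1
  obtain ⟨c, rfl⟩ := four_dvd_of_sq_eq hs hs2 (by omega) hK hdvd
  have ha : 16 * c.natAbs ^ 2 + 8 = 3 * n := by
    zify
    rw [sq_abs]
    linear_combination hs
  refine ⟨Or.inl (by omega), 4 * c.natAbs, ?_, by ring_nf; omega,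
    Or.inl ⟨dvd_mul_right 4 _, ?_⟩⟩
  · have : c.natAbs ≠ 0 := fun h => by rw [h] at ha; omega
    omega
  · rintro ⟨t, ht⟩
    have := congrArg (· ^ 2) ht
    ring_nf at this
    omega
end

section
/- There exists a tight (3,3)-design in F_2^{24}: a code C ⊆ F_2^{24} with M_2(C) = M_4(C) = M_6(C) = 0 and |C| = 2048 = ∑_{i=0}^3 C(23, i). -/
open Finset

/-! The code is the set of extended Golay codewords vanishing at a fixed coordinate. It is
linear, so the double sum defining `M_i(C)` collapses to `|C| ∑_{c ∈ C} Q_i(1 - wt(c)/12)` and only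
the weight distribution matters: `A_0 = 1`, `A_8 = 506`, `A_12 = 1288`, `A_16 = 253`, which is
checked by a kernel computation on 24-bit masks. What remains is the evaluation of `Q_2`, `Q_4`,
`Q_6` at `1, 1/3, 0, -1/3`. -/

section SubtractionClosed

variable {G M : Type*} [AddGroup G] [DecidableEq G] [AddCommMonoid M]

theorem Finset.sum_sum_neg_add_of_neg_add_mem {C : Finset G}
    (hC : ∀ x ∈ C, ∀ y ∈ C, -x + y ∈ C) (f : G → M) :
    ∑ x ∈ C, ∑ y ∈ C, f (-x + y) = #C • ∑ c ∈ C, f c := by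
  rw [← Finset.sum_const, Finset.sum_congr rfl]
  intro x hx
  have himage : C.image (-x + ·) = C :=
    eq_of_subset_of_card_le (image_subset_iff.2 (hC x hx))
      (card_image_of_injective _ (add_right_injective _)).ge
  conv_rhs => rw [← himage]
  rw [sum_image fun _ _ _ _ h => add_left_cancel h]

end SubtractionClosed

theorem moment_eq_card_mul_sum_hammingNorm {n : ℕ} {C : Finset (Fin n → ZMod 2)}
    (hC : ∀ x ∈ C, ∀ y ∈ C, -x + y ∈ C) (i : ℕ) :
    moment n C i = #C * ∑ c ∈ C, kraw n i (1 - 2 * (hammingNorm c : ℝ) / n) := by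
  simp only [moment, ip, hammingDist_eq_hammingNorm]
  rw [sum_sum_neg_add_of_neg_add_mem hC (fun c => kraw n i (1 - 2 * (hammingNorm c : ℝ) / n)),
    nsmul_eq_mul]

def bitsToVec (n m : ℕ) : Fin n → ZMod 2 := fun j => if m.testBit j then 1 else 0

theorem bitsToVec_xor (n a b : ℕ) : bitsToVec n (a ^^^ b) = bitsToVec n a + bitsToVec n b := by
  funext j
  simp only [bitsToVec, Nat.testBit_xor, Pi.add_apply]
  cases a.testBit j <;> cases b.testBit j <;> decide

def bitCount : ℕ → ℕ → ℕ
  | 0, _ => 0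
  | n + 1, m => m % 2 + bitCount n (m / 2)

theorem bitCount_eq_card (n m : ℕ) : bitCount n m = #{j : Fin n | m.testBit j} := by
  induction n generalizing m with
  | zero => rfl
  | succ n ih =>
    rw [bitCount, ih, card_filter, card_filter, Fin.sum_univ_succ]
    congr 1
    · rcases Nat.mod_two_eq_zero_or_one m with h | h <;> simp [Nat.testBit_zero, h]
    · simp only [Fin.val_succ, Nat.testBit_add_one]

theorem hammingNorm_bitsToVec (n m : ℕ) : hammingNorm (bitsToVec n m) = bitCount n m := by
  rw [bitCount_eq_card, hammingNorm]
  congr 1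
  apply filter_congr
  intro j _
  simp only [bitsToVec]
  split <;> simp [*]

def xorSpan : List ℕ → ℕ → ℕ
  | [], _ => 0
  | r :: rs, m => (if m.testBit 0 then r else 0) ^^^ xorSpan rs (m / 2)

theorem xorSpan_xor (rs : List ℕ) (k l : ℕ) :
    xorSpan rs (k ^^^ l) = xorSpan rs k ^^^ xorSpan rs l := by
  induction rs generalizing k l with
  | nil => simp [xorSpan]
  | cons r rs ih =>
    have hdiv : (k ^^^ l) / 2 = k / 2 ^^^ l / 2 := Nat.eq_of_testBit_eq fun i => by
      simp only [Nat.testBit_div_two, Nat.testBit_xor]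
    have hbit : (if (k ^^^ l).testBit 0 then r else 0)
        = (if k.testBit 0 then r else 0) ^^^ (if l.testBit 0 then r else 0) := by
      rw [Nat.testBit_xor]
      cases k.testBit 0 <;> cases l.testBit 0 <;> simp
    rw [xorSpan, xorSpan, xorSpan, hdiv, ih, hbit]
    ac_rfl

-- The words `x^k g(x)`, `1 ≤ k ≤ 11`, for the Golay generator polynomial
-- `g = 1 + x² + x⁴ + x⁵ + x⁶ + x¹⁰ + x¹¹`, with an overall parity bit in position 23 (bit `j` is
-- coordinate `j`): a basis of the extended Golay codewords vanishing at coordinate 0.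
def golayRows : List ℕ :=
  [8394986, 8401364, 8414120, 8439632, 8490656, 8592704, 8796800, 9204992, 10021376,
    11654144, 14919680]

def golayWord (m : ℕ) : ℕ := xorSpan golayRows m

def golayWeight (m : ℕ) : ℕ := bitCount 24 (golayWord m)

set_option maxRecDepth 100000 in
theorem golayWeight_distribution : (range 2048).image golayWeight = {0, 8, 12, 16} ∧
    #{m ∈ range 2048 | golayWeight m = 0} = 1 ∧ #{m ∈ range 2048 | golayWeight m = 8} = 506 ∧
    #{m ∈ range 2048 | golayWeight m = 12} = 1288 ∧
    #{m ∈ range 2048 | golayWeight m = 16} = 253 := by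
  decide +kernel

theorem eq_zero_of_golayWeight_eq_zero {m : ℕ} (hm : m < 2048) (h : golayWeight m = 0) :
    m = 0 := by
  have hzero : golayWeight 0 = 0 := by decide
  exact card_le_one.1 golayWeight_distribution.2.1.le m (by simp [hm, h]) 0 (by simp [hzero])

def golayVec (m : ℕ) : Fin 24 → ZMod 2 := bitsToVec 24 (golayWord m)

theorem golayVec_xor (k l : ℕ) : golayVec (k ^^^ l) = golayVec k + golayVec l := by
  simp only [golayVec, golayWord, xorSpan_xor, bitsToVec_xor]

theorem hammingNorm_golayVec (m : ℕ) : hammingNorm (golayVec m) = golayWeight m :=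
  hammingNorm_bitsToVec _ _

theorem xor_mem_range_2048 {k l : ℕ} (hk : k ∈ range 2048) (hl : l ∈ range 2048) :
    k ^^^ l ∈ range 2048 := by
  simp only [mem_range] at hk hl ⊢
  exact Nat.xor_lt_two_pow (n := 11) hk hl

theorem golayVec_injOn : Set.InjOn golayVec (range 2048) := by
  intro k hk l hl h
  have hnorm : golayWeight (k ^^^ l) = 0 := by
    rw [← hammingNorm_golayVec, golayVec_xor, h, ZModModule.add_self, hammingNorm_zero]
  exact xor_eq_zero_iff.1 <| eq_zero_of_golayWeight_eq_zero
    (mem_range.1 (xor_mem_range_2048 hk hl)) hnorm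

def golaySubcode : Finset (Fin 24 → ZMod 2) := (range 2048).image golayVec

theorem card_golaySubcode : #golaySubcode = 2048 := by
  rw [golaySubcode, card_image_of_injOn golayVec_injOn, card_range]

theorem neg_add_mem_golaySubcode :
    ∀ x ∈ golaySubcode, ∀ y ∈ golaySubcode, -x + y ∈ golaySubcode := by
  simp only [golaySubcode, forall_mem_image]
  intro k hk l hl
  rw [ZModModule.neg_eq_self, ← golayVec_xor]
  exact mem_image_of_mem _ (xor_mem_range_2048 hk hl)

theorem moment_golaySubcode (i : ℕ) :
    moment 24 golaySubcode i = 2048 * (kraw 24 i 1 + 506 * kraw 24 i (1 / 3) +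
      1288 * kraw 24 i 0 + 253 * kraw 24 i (-1 / 3)) := by
  obtain ⟨himage, h0, h8, h12, h16⟩ := golayWeight_distribution
  rw [moment_eq_card_mul_sum_hammingNorm neg_add_mem_golaySubcode, card_golaySubcode,
    golaySubcode, sum_image golayVec_injOn]
  simp only [hammingNorm_golayVec, Nat.cast_ofNat]
  rw [sum_comp (fun w : ℕ => kraw 24 i (1 - 2 * (w : ℝ) / 24)), himage, sum_insert (by decide),
    sum_insert (by decide), sum_insert (by decide), sum_singleton, h0, h8, h12, h16]
  norm_num [add_assoc]

/-- there exists a tight `(3,3)`-design in `F_2^{24}` of cardinality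
`2048 = ∑_{i=0}^3 C(23,i)`. -/
theorem stmt_14 :
    ∃ C : Finset (Fin 24 → ZMod 2),
      moment 24 C 2 = 0 ∧ moment 24 C 4 = 0 ∧ moment 24 C 6 = 0 ∧
      C.card = 2048 ∧ C.card = ∑ i ∈ Finset.range 4, Nat.choose 23 i := by
  refine ⟨golaySubcode, ?_, ?_, ?_, card_golaySubcode, by rw [card_golaySubcode]; decide⟩
  all_goals rw [moment_golaySubcode]; norm_num [kraw]
end

section
/- If C ⊆ F_2^n is a tight (k,k)-design (1 ≤ k ≤ n/2), i.e. a (k,k)-design with |C| = ∑_{i=0}^k C(n−1,i), then C contains no pair of antipodal points: if x ∈ C then −x ∉ C. -/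
open Finset

/-!
With the Walsh characters `χ_S(x) = ∏_{j ∈ S} (-1)^{x_j}`, the moment `M_i(C)` satisfies
`C(n,i) · M_i(C) = ∑_{|S| = i} (∑_{x ∈ C} χ_S(x))²`: the sum of `χ_S(x - y)` over `|S| = i` is
an elementary symmetric function of a `±1` vector, and these obey the Krawtchouk recurrence.
Hence in a `(k,k)`-design `∑_{x ∈ C} χ_U(x) = 0` whenever `0 < |U| ≤ 2k` is even, so the
characters `χ_S` with `|S| ≤ k`, `|S| ≡ k (mod 2)` are pairwise orthogonal as functions on `C`.
If `x` and `-x` both lie in `C`, then `δ_x - (-1)^k δ_{-x}` is orthogonal to all of them, since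
`χ_S(-x) = (-1)^{|S|} χ_S(x)`. This gives `∑_{i ≤ k} C(n-1,i) + 1` nonzero orthogonal vectors
in `ℝ^C`, one more than `|C|` allows.
-/

theorem kraw_succ_succ_mul (n m : ℕ) (t : ℝ) (hm : m + 2 ≤ n) :
    kraw n (m + 2) t * (n - (m + 1))
      = n * t * kraw n (m + 1) t - (m + 1) * kraw n m t := by
  have hden : (n : ℝ) - (m + 1) ≠ 0 := by
    have : (m : ℝ) + 2 ≤ n := by exact_mod_cast hm
    linarith
  rw [kraw, div_mul_cancel₀ _ hden]

section ElementarySymmetric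

variable {ι R : Type*} [Fintype ι] [CommRing R]

def elemSymm (ε : ι → R) (m : ℕ) : R :=
  ∑ S ∈ powersetCard m univ, ∏ j ∈ S, ε j

theorem elemSymm_zero (ε : ι → R) : elemSymm ε 0 = 1 := by
  simp [elemSymm]

theorem elemSymm_one (ε : ι → R) : elemSymm ε 1 = ∑ j, ε j := by
  simp [elemSymm, powersetCard_one]

theorem elemSymm_eq_zero_of_lt (ε : ι → R) {m : ℕ} (hm : Fintype.card ι < m) :
    elemSymm ε m = 0 := by
  rw [elemSymm, powersetCard_eq_empty.2 (by rwa [card_univ]), sum_empty]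

variable [DecidableEq ι]

theorem sum_powersetCard_sum_compl_eq {M : Type*} [AddCommMonoid M]
    (g : Finset ι → Finset ι → M) (m : ℕ) :
    ∑ S ∈ powersetCard m univ, ∑ j ∈ Sᶜ, g S (insert j S)
      = ∑ T ∈ powersetCard (m + 1) univ, ∑ j ∈ T, g (T.erase j) T := by
  rw [sum_sigma', sum_sigma']
  refine sum_nbij' (fun p => ⟨insert p.2 p.1, p.2⟩) (fun p => ⟨p.1.erase p.2, p.2⟩)
    ?_ ?_ ?_ ?_ ?_
  · rintro ⟨S, j⟩ h
    simp only [mem_sigma, mem_powersetCard_univ, mem_compl] at h ⊢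
    exact ⟨by rw [card_insert_of_notMem h.2, h.1], mem_insert_self j S⟩
  · rintro ⟨T, j⟩ h
    simp only [mem_sigma, mem_powersetCard_univ, mem_compl] at h ⊢
    exact ⟨by rw [card_erase_of_mem h.2, h.1, Nat.add_sub_cancel], notMem_erase j T⟩
  · rintro ⟨S, j⟩ h
    simp only [mem_sigma, mem_compl] at h
    simp [erase_insert h.2]
  · rintro ⟨T, j⟩ h
    simp only [mem_sigma] at h
    simp [insert_erase h.2]
  · rintro ⟨S, j⟩ h
    simp only [mem_sigma, mem_compl] at h
    simp [erase_insert h.2]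

theorem sum_powersetCard_sum_compl_insert (f : Finset ι → R) (m : ℕ) :
    ∑ S ∈ powersetCard m univ, ∑ j ∈ Sᶜ, f (insert j S)
      = (m + 1) * ∑ T ∈ powersetCard (m + 1) univ, f T := by
  rw [sum_powersetCard_sum_compl_eq (fun _ T => f T), mul_sum]
  refine sum_congr rfl fun T hT => ?_
  rw [sum_const, nsmul_eq_mul, mem_powersetCard_univ.1 hT, Nat.cast_succ]

theorem sum_powersetCard_sum_erase (f : Finset ι → R) (m : ℕ) :
    ∑ T ∈ powersetCard (m + 1) univ, ∑ j ∈ T, f (T.erase j)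
      = (Fintype.card ι - m) * ∑ S ∈ powersetCard m univ, f S := by
  rw [← sum_powersetCard_sum_compl_eq (fun S _ => f S), mul_sum]
  refine sum_congr rfl fun S hS => ?_
  rw [mem_powersetCard_univ] at hS
  rw [sum_const, nsmul_eq_mul, card_compl, Nat.cast_sub (hS ▸ card_le_univ S), hS]

theorem sum_mul_elemSymm_succ (ε : ι → R) (hε : ∀ j, ε j * ε j = 1) (m : ℕ) :
    (∑ j, ε j) * elemSymm ε (m + 1)
      = (m + 2) * elemSymm ε (m + 2) + (Fintype.card ι - m) * elemSymm ε m := by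
  have hsplit : ∀ S : Finset ι, (∑ j, ε j) * ∏ i ∈ S, ε i
      = ∑ j ∈ Sᶜ, ∏ i ∈ insert j S, ε i + ∑ j ∈ S, ∏ i ∈ S.erase j, ε i := by
    intro S
    rw [← sum_compl_add_sum S, add_mul, sum_mul, sum_mul]
    congr 1
    · exact sum_congr rfl fun j hj => (prod_insert (mem_compl.1 hj)).symm
    · refine sum_congr rfl fun j hj => ?_
      rw [← mul_prod_erase S ε hj, ← mul_assoc, hε, one_mul]
  rw [elemSymm, mul_sum, sum_congr rfl fun S _ => hsplit S, sum_add_distrib,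
    sum_powersetCard_sum_compl_insert (fun T => ∏ i ∈ T, ε i),
    sum_powersetCard_sum_erase (fun S => ∏ i ∈ S, ε i), elemSymm, elemSymm]
  push_cast
  ring

theorem elemSymm_eq_choose_mul_kraw (ε : ι → ℝ) (hε : ∀ j, ε j * ε j = 1) (i : ℕ) :
    elemSymm ε i
      = (Fintype.card ι).choose i * kraw (Fintype.card ι) i ((∑ j, ε j) / Fintype.card ι) := by
  set N := Fintype.card ι with hNdef
  set t := (∑ j, ε j) / N
  rcases lt_or_ge N i with hi | hi
  · rw [elemSymm_eq_zero_of_lt ε hi, Nat.choose_eq_zero_of_lt hi, Nat.cast_zero, zero_mul]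
  induction i using Nat.twoStepInduction with
  | zero => simp [elemSymm_zero, kraw]
  | one =>
    have hN : (N : ℝ) ≠ 0 := Nat.cast_ne_zero.2 (by omega)
    rw [elemSymm_one, Nat.choose_one_right, kraw, mul_div_cancel₀ _ hN]
  | more m ih₀ ih₁ =>
    have hN : (N : ℝ) ≠ 0 := Nat.cast_ne_zero.2 (by omega)
    have hsum : ∑ j, ε j = N * t := (mul_div_cancel₀ _ hN).symm
    have hrec := sum_mul_elemSymm_succ ε hε m
    rw [← hNdef, hsum, ih₀ (by omega), ih₁ (by omega)] at hrec
    have hkraw := kraw_succ_succ_mul N m t hi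
    have hc₂ : ((m : ℝ) + 2) * N.choose (m + 2) = (N - (m + 1)) * N.choose (m + 1) := by
      have := Nat.choose_succ_right_eq N (m + 1)
      rw [← Nat.cast_inj (R := ℝ)] at this
      push_cast [Nat.cast_sub (show m + 1 ≤ N by omega)] at this
      linarith
    have hc₁ : ((m : ℝ) + 1) * N.choose (m + 1) = (N - m) * N.choose m := by
      have := Nat.choose_succ_right_eq N m
      rw [← Nat.cast_inj (R := ℝ)] at this
      push_cast [Nat.cast_sub (show m ≤ N by omega)] at this
      linarith
    apply mul_left_cancel₀ (show (m : ℝ) + 2 ≠ 0 by positivity)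
    linear_combination -hrec - kraw N (m + 2) t * hc₂ - (N.choose (m + 1) : ℝ) * hkraw
      + kraw N m t * hc₁

end ElementarySymmetric

theorem prod_mul_prod_eq_prod_symmDiff {ι M : Type*} [DecidableEq ι] [CommMonoid M]
    (f : ι → M) (hf : ∀ j, f j * f j = 1) (S T : Finset ι) :
    (∏ j ∈ S, f j) * ∏ j ∈ T, f j = ∏ j ∈ symmDiff S T, f j := by
  rw [← prod_union_inter, symmDiff_eq_sup_sdiff_inf,
    ← prod_sdiff (show S ∩ T ⊆ S ∪ T from inter_subset_union), mul_assoc, ← prod_mul_distrib,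
    prod_eq_one fun j _ => hf j, mul_one]
  rfl

noncomputable def signChar : AddChar (ZMod 2) ℝ :=
  AddChar.zmodChar 2 (by norm_num : (-1 : ℝ) ^ 2 = 1)

theorem signChar_one : signChar 1 = -1 := by
  rw [signChar, AddChar.zmodChar_apply, ZMod.val_one, pow_one]

theorem signChar_mul_self (a : ZMod 2) : signChar a * signChar a = 1 := by
  rw [← AddChar.map_add_eq_mul, CharTwo.add_self_eq_zero, AddChar.map_zero_eq_one]

theorem signChar_sub (a b : ZMod 2) : signChar (a - b) = signChar a * signChar b := by
  rw [CharTwo.sub_eq_add, AddChar.map_add_eq_mul]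

theorem sum_signChar_sub {ι : Type*} [Fintype ι] (x y : ι → ZMod 2) :
    ∑ j, signChar (x j - y j) = Fintype.card ι - 2 * hammingDist x y := by
  have h : ∀ c : ZMod 2, signChar c = 1 - 2 * if c ≠ 0 then 1 else 0 := by
    intro c
    obtain rfl | rfl : c = 0 ∨ c = 1 := by decide +revert
    · simp
    · norm_num [signChar_one]
  simp only [h, sub_ne_zero, sum_sub_distrib, ← mul_sum, sum_boole, sum_const, card_univ,
    nsmul_eq_mul, mul_one]
  rfl

section Walsh

variable {n : ℕ}

noncomputable def walsh (S : Finset (Fin n)) (x : Fin n → ZMod 2) : ℝ :=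
  ∏ j ∈ S, signChar (x j)

theorem walsh_ne_zero (S : Finset (Fin n)) (x : Fin n → ZMod 2) : walsh S x ≠ 0 :=
  prod_ne_zero_iff.2 fun j _ => left_ne_zero_of_mul_eq_one (signChar_mul_self (x j))

theorem walsh_mul_walsh (S T : Finset (Fin n)) (x : Fin n → ZMod 2) :
    walsh S x * walsh T x = walsh (symmDiff S T) x :=
  prod_mul_prod_eq_prod_symmDiff _ (fun j => signChar_mul_self (x j)) S T

theorem walsh_antip (S : Finset (Fin n)) (x : Fin n → ZMod 2) :
    walsh S (antip x) = (-1) ^ #S * walsh S x := by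
  simp only [walsh, antip, AddChar.map_add_eq_mul, signChar_one, prod_mul_distrib, prod_const]
  ring

theorem choose_mul_kraw_ip (hn : 0 < n) (i : ℕ) (x y : Fin n → ZMod 2) :
    n.choose i * kraw n i (ip n x y) = ∑ S ∈ powersetCard i univ, walsh S x * walsh S y := by
  have h := elemSymm_eq_choose_mul_kraw (fun j => signChar (x j - y j))
    (fun j => signChar_mul_self _) i
  rw [sum_signChar_sub, Fintype.card_fin] at h
  have hip : ((n : ℝ) - 2 * hammingDist x y) / n = ip n x y := by
    rw [ip, sub_div, div_self (Nat.cast_ne_zero.2 hn.ne'), mul_div_assoc]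
  rw [← hip, ← h, elemSymm]
  simp only [walsh, signChar_sub, prod_mul_distrib]

theorem choose_mul_moment (hn : 0 < n) (C : Finset (Fin n → ZMod 2)) (i : ℕ) :
    n.choose i * moment n C i = ∑ S ∈ powersetCard i univ, (∑ x ∈ C, walsh S x) ^ 2 := by
  simp only [sq, sum_mul_sum]
  simp only [moment, mul_sum, choose_mul_kraw_ip hn]
  exact (sum_congr rfl fun x _ => sum_comm).trans sum_comm

theorem sum_walsh_eq_zero_of_moment_eq_zero (hn : 0 < n) {C : Finset (Fin n → ZMod 2)}
    {S : Finset (Fin n)} (hM : moment n C #S = 0) : ∑ x ∈ C, walsh S x = 0 := by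
  have h := choose_mul_moment hn C #S
  rw [hM, mul_zero, eq_comm, sum_eq_zero_iff_of_nonneg fun _ _ => sq_nonneg _] at h
  exact pow_eq_zero_iff two_ne_zero |>.1 (h S (mem_powersetCard_univ.2 rfl))

end Walsh

theorem card_le_card_of_orthogonal {ι α : Type*} [Fintype ι] (C : Finset α) (v : ι → α → ℝ)
    (horth : Pairwise fun i j => ∑ x ∈ C, v i x * v j x = 0)
    (hne : ∀ i, ∃ x ∈ C, v i x ≠ 0) :
    Fintype.card ι ≤ #C := by
  let w : ι → EuclideanSpace ℝ C := fun i => WithLp.toLp 2 fun x => v i x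
  have hw : LinearIndependent ℝ w := by
    refine linearIndependent_of_ne_zero_of_inner_eq_zero (fun i hi => ?_) (fun i j hij => ?_)
    · obtain ⟨x, hx, hvx⟩ := hne i
      exact hvx (congrArg (fun u : EuclideanSpace ℝ C => u ⟨x, hx⟩) hi)
    · simp only [w, PiLp.inner_apply, RCLike.inner_apply, conj_trivial]
      rw [sum_coe_sort C fun x => v j x * v i x]
      exact horth hij.symm
  simpa using hw.fintype_card_le_finrank

theorem card_symmDiff_add_two_mul_card_inter {α : Type*} [DecidableEq α] (S T : Finset α) :
    #(symmDiff S T) + 2 * #(S ∩ T) = #S + #T := by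
  rw [symmDiff_eq_sup_sdiff_inf, sup_eq_union, inf_eq_inter,
    card_sdiff_of_subset inter_subset_union, ← card_union_add_card_inter S T]
  have := card_le_card (inter_subset_union : S ∩ T ⊆ S ∪ T)
  omega

theorem sum_range_choose_succ_parity (n k : ℕ) :
    ∑ i ∈ range (k + 1), (if i % 2 = k % 2 then (n + 1).choose i else 0)
      = ∑ i ∈ range (k + 1), n.choose i := by
  induction k using Nat.twoStepInduction with
  | zero => simp
  | one => simp [sum_range_succ, add_comm]
  | more k ih _ =>
    have hpar : (k + 2) % 2 = k % 2 := Nat.add_mod_right k 2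
    rw [sum_range_succ, sum_range_succ, hpar, ih, if_pos rfl, if_neg (by omega),
      sum_range_succ _ (k + 2), sum_range_succ _ (k + 1), Nat.choose_succ_succ, add_zero,
      add_assoc]

section ParityFamily

variable {n : ℕ}

def parityFamily (n k : ℕ) : Finset (Finset (Fin n)) :=
  univ.filter fun S => #S ≤ k ∧ #S % 2 = k % 2

theorem card_parityFamily (n k : ℕ) :
    #(parityFamily n k) = ∑ i ∈ range (k + 1), if i % 2 = k % 2 then n.choose i else 0 := by
  rw [card_eq_sum_card_fiberwise (f := card) (t := range (k + 1)) fun S hS => by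
    simp only [parityFamily, coe_filter, Set.mem_ofPred_eq, mem_univ, true_and] at hS
    exact mem_range.2 (Nat.lt_succ_of_le hS.1)]
  refine sum_congr rfl fun i hi => ?_
  have hik := mem_range.1 hi
  split_ifs with hpar
  · rw [show n.choose i = #(powersetCard i (univ : Finset (Fin n))) by simp]
    refine congrArg card (ext fun S => ?_)
    simp only [parityFamily, mem_filter, mem_univ, true_and, mem_powersetCard_univ]
    constructor
    · exact And.right
    · rintro rfl
      exact ⟨⟨by omega, hpar⟩, rfl⟩
  · rw [card_eq_zero, filter_eq_empty_iff]
    intro S hS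
    simp only [parityFamily, mem_filter, mem_univ, true_and] at hS
    omega

noncomputable def antipodalPair (k : ℕ) (x₀ x : Fin n → ZMod 2) : ℝ :=
  (if x = x₀ then 1 else 0) - (-1) ^ k * if x = antip x₀ then 1 else 0

theorem antip_ne (hn : 0 < n) (x : Fin n → ZMod 2) : antip x ≠ x := fun h => by
  simpa [antip] using congrFun h ⟨0, hn⟩

variable {C : Finset (Fin n → ZMod 2)} {x₀ : Fin n → ZMod 2}

theorem sum_antipodalPair_mul (k : ℕ) (hx₀ : x₀ ∈ C) (hx₁ : antip x₀ ∈ C)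
    (f : (Fin n → ZMod 2) → ℝ) :
    ∑ x ∈ C, antipodalPair k x₀ x * f x = f x₀ - (-1) ^ k * f (antip x₀) := by
  simp [antipodalPair, sub_mul, sum_sub_distrib, hx₀, hx₁]

theorem sum_antipodalPair_mul_walsh {k : ℕ} (hx₀ : x₀ ∈ C) (hx₁ : antip x₀ ∈ C)
    {S : Finset (Fin n)} (hS : #S % 2 = k % 2) :
    ∑ x ∈ C, antipodalPair k x₀ x * walsh S x = 0 := by
  have hsign : ((-1 : ℝ) ^ k) * (-1) ^ #S = 1 := by
    rw [← pow_add, Even.neg_one_pow (Nat.even_iff.2 (by omega))]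
  rw [sum_antipodalPair_mul k hx₀ hx₁, walsh_antip, ← mul_assoc, hsign, one_mul, sub_self]

theorem sum_walsh_mul_walsh_parityFamily {k : ℕ}
    (hvan : ∀ U : Finset (Fin n), U.Nonempty → #U % 2 = 0 → #U ≤ 2 * k → ∑ x ∈ C, walsh U x = 0)
    {S T : Finset (Fin n)} (hS : S ∈ parityFamily n k) (hT : T ∈ parityFamily n k) (hST : S ≠ T) :
    ∑ x ∈ C, walsh S x * walsh T x = 0 := by
  simp only [parityFamily, mem_filter, mem_univ, true_and] at hS hT
  have hcard := card_symmDiff_add_two_mul_card_inter S T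
  simp only [walsh_mul_walsh]
  exact hvan _ (symmDiff_nonempty.2 hST) (by omega) (by omega)

theorem card_parityFamily_lt_card (hn : 0 < n) {k : ℕ}
    (hvan : ∀ U : Finset (Fin n), U.Nonempty → #U % 2 = 0 → #U ≤ 2 * k → ∑ x ∈ C, walsh U x = 0)
    (hx₀ : x₀ ∈ C) (hx₁ : antip x₀ ∈ C) :
    #(parityFamily n k) < #C := by
  let v : Option (parityFamily n k) → (Fin n → ZMod 2) → ℝ
    | none => antipodalPair k x₀
    | some S => walsh S
  have hmem : ∀ S ∈ parityFamily n k, #S % 2 = k % 2 := fun S hS => (mem_filter.1 hS).2.2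
  have horth : Pairwise fun o p => ∑ x ∈ C, v o x * v p x = 0 := by
    rintro (_ | S) (_ | T) hop
    · exact absurd rfl hop
    · exact sum_antipodalPair_mul_walsh hx₀ hx₁ (hmem T T.2)
    · simp only [v, mul_comm (walsh _ _)]
      exact sum_antipodalPair_mul_walsh hx₀ hx₁ (hmem S S.2)
    · exact sum_walsh_mul_walsh_parityFamily hvan S.2 T.2 fun h => hop (by rw [Subtype.ext h])
  have hne : ∀ o, ∃ x ∈ C, v o x ≠ 0 := by
    rintro (_ | S)
    · exact ⟨x₀, hx₀, by simp [v, antipodalPair, (antip_ne hn x₀).symm]⟩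
    · exact ⟨x₀, hx₀, walsh_ne_zero S x₀⟩
  simpa using card_le_card_of_orthogonal C v horth hne

end ParityFamily

theorem IsKKDesign.sum_walsh_eq_zero {n k : ℕ} (hn : 0 < n) {C : Finset (Fin n → ZMod 2)}
    (hC : IsKKDesign n k C) {U : Finset (Fin n)} (hU : U.Nonempty) (hpar : #U % 2 = 0)
    (hle : #U ≤ 2 * k) : ∑ x ∈ C, walsh U x = 0 := by
  obtain ⟨j, hj⟩ : ∃ j, #U = 2 * j := ⟨#U / 2, by omega⟩
  have hU₀ := hU.card_pos
  exact sum_walsh_eq_zero_of_moment_eq_zero hn (hj ▸ hC.2 j (by omega) (by omega))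

theorem stmt_16_general (n k : ℕ) (hn : 0 < n)
    (C : Finset (Fin n → ZMod 2)) (hC : IsKKDesign n k C)
    (htight : C.card = ∑ i ∈ Finset.range (k + 1), (n - 1).choose i) :
    ∀ x ∈ C, antip x ∉ C := by
  intro x₀ hx₀ hx₁
  have hcard : #(parityFamily n k) = #C := by
    rw [card_parityFamily, htight, ← sum_range_choose_succ_parity, Nat.sub_add_cancel hn]
  exact (card_parityFamily_lt_card hn (fun _ => hC.sum_walsh_eq_zero hn) hx₀ hx₁).ne hcard

/-- a tight `(k,k)`-design contains no pair of antipodal points. -/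
theorem stmt_16 (n k : ℕ) (hn : 0 < n) (hk : 1 ≤ k) (hkn : 2 * k ≤ n)
    (C : Finset (Fin n → ZMod 2)) (hC : IsKKDesign n k C)
    (htight : C.card = ∑ i ∈ Finset.range (k + 1), (n - 1).choose i) :
    ∀ x ∈ C, antip x ∉ C :=
  stmt_16_general n k hn C hC htight
end
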